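/- arXiv:2412.01437 — 8 statements merged into one kernel-verified Lean document; each statement's English description precedes it below -/
import Mathlib

section
/- Let X be a compact metric space and f : X → X a continuous surjection. If (x, y) is a negatively regionally proximal pair (i.e., there exist sequences x_n, y_n in X and integers m_n → ∞ with d(x_n, y_n) → 0, f^{m_n}(x_n) → x, and f^{m_n}(y_n) → y), then x and y are identified by the maximal equicontinuous factor of (X, f). -/
open Metric Filter Topology Set

section Defs
variable {X Y : Type*}

/-- Factor map (semi-conjugacy): continuous surjection intertwining the dynamics. -/
def IsFactorMap [TopologicalSpace X] [TopologicalSpace Y]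
    (f : X → X) (g : Y → Y) (π : X → Y) : Prop :=
  Continuous π ∧ Function.Surjective π ∧ π ∘ f = g ∘ π

/-- Monotone map: the preimage of every point is connected. -/
def MonotoneFibers [TopologicalSpace X] [TopologicalSpace Y] (π : X → Y) : Prop :=
  ∀ y : Y, IsConnected (π ⁻¹' {y})

/-- Minimal map: continuous, and no proper nonempty closed invariant subset. -/
def MinimalMap [TopologicalSpace X] (f : X → X) : Prop :=
  Continuous f ∧ ∀ M : Set X, IsClosed M → M.Nonempty → MapsTo f M M → M = univ

/-- Topological transitivity. -/
def TransitiveMap [TopologicalSpace X] (f : X → X) : Prop :=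
  ∀ U V : Set X, IsOpen U → IsOpen V → U.Nonempty → V.Nonempty →
    ∃ n : ℕ, ((f^[n]) '' U ∩ V).Nonempty

/-- Weak mixing: the product system is transitive. -/
def WeaklyMixing [TopologicalSpace X] (f : X → X) : Prop :=
  TransitiveMap (fun p : X × X => (f p.1, f p.2))

/-- Regionally proximal pairs. -/
def RPplus [MetricSpace X] (f : X → X) (x y : X) : Prop :=
  ∀ ε > (0 : ℝ), ∀ Ox Oy : Set X, IsOpen Ox → IsOpen Oy → x ∈ Ox → y ∈ Oy →
    ∃ x' ∈ Ox, ∃ y' ∈ Oy, ∃ n : ℕ, dist (f^[n] x') (f^[n] y') < ε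

/-- Negatively regionally proximal pairs. -/
def RPminus [MetricSpace X] (f : X → X) (x y : X) : Prop :=
  ∃ (xs ys : ℕ → X) (m : ℕ → ℕ),
    Tendsto m atTop atTop ∧
    Tendsto (fun n => dist (xs n) (ys n)) atTop (𝓝 0) ∧
    Tendsto (fun n => f^[m n] (xs n)) atTop (𝓝 x) ∧
    Tendsto (fun n => f^[m n] (ys n)) atTop (𝓝 y)

/-- `x` and `y` are identified by the maximal equicontinuous factor, i.e.
they are identified by every equicontinuous factor of `(X, f)`. -/
def SeqRel [MetricSpace X] (f : X → X) (x y : X) : Prop :=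
  ∀ (Y : Type) (_ : MetricSpace Y) (_ : CompactSpace Y) (g : Y → Y) (π : X → Y),
    Continuous g → Equicontinuous (fun n : ℕ => g^[n]) →
    IsFactorMap f g π → π x = π y

/-- A null family: for each ε > 0 only finitely many members have diameter ≥ ε. -/
def NullFamily [MetricSpace X] {ι : Type*} (A : ι → Set X) : Prop :=
  ∀ ε > (0 : ℝ), {i | ε ≤ diam (A i)}.Finite

/-- Finitely Suslinean: every pairwise disjoint family of subcontinua is null. -/
def FinitelySuslinean (X : Type*) [MetricSpace X] : Prop :=
  ∀ (ι : Type) (A : ι → Set X),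
    (∀ i, (A i).Nonempty ∧ IsCompact (A i) ∧ IsConnected (A i)) →
    Pairwise (Function.onFun Disjoint A) → NullFamily A

/-- Suslinean: every pairwise disjoint family of nondegenerate subcontinua is countable. -/
def Suslinean (X : Type*) [MetricSpace X] : Prop :=
  ∀ S : Set (Set X),
    (∀ A ∈ S, IsCompact A ∧ IsConnected A ∧ A.Nontrivial) →
    S.Pairwise Disjoint → S.Countable

/-- Hereditarily locally connected: every subcontinuum is locally connected. -/
def HereditarilyLocallyConnected (X : Type*) [TopologicalSpace X] : Prop :=
  ∀ A : Set X, IsCompact A → IsConnected A → LocallyConnectedSpace A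

/-- Homogeneous space: the homeomorphism group acts transitively. -/
def HomogeneousSpace (X : Type*) [TopologicalSpace X] : Prop :=
  ∀ x y : X, ∃ h : X ≃ₜ X, h x = y

/-- Mesh of a set: supremum of diameters of its connected components. -/
noncomputable def Mesh [MetricSpace X] (B : Set X) : ℝ :=
  ⨆ x : B, diam (connectedComponentIn B (x : X))

/-- Positively continuum-wise expansive map. -/
def PosCWExpansive [MetricSpace X] (f : X → X) : Prop :=
  ∃ c > (0 : ℝ), ∀ A : Set X, IsCompact A → IsConnected A → A.Nontrivial →
    ∃ n : ℕ, c < diam (f^[n] '' A)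

/-- Minimal set of a map. -/
def IsMinimalSet [TopologicalSpace X] (f : X → X) (M : Set X) : Prop :=
  IsClosed M ∧ M.Nonempty ∧ MapsTo f M M ∧
    ∀ N ⊆ M, IsClosed N → N.Nonempty → MapsTo f N N → N = M

/-- Rotation of the circle by angle `2πα`. -/
noncomputable def circleRotation (α : ℝ) : Circle → Circle :=
  fun z => Circle.exp (2 * Real.pi * α) * z

end Defs
/-- negatively regionally proximal pairs are identified by the
maximal equicontinuous factor. -/
theorem stmt0 {X : Type*} [MetricSpace X] [CompactSpace X]
    (f : X → X) (hf : Continuous f) (hsurj : Function.Surjective f)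
    (x y : X) (h : RPminus f x y) : SeqRel f x y := by
  intro Y _ _ g π hg heq hfac
  obtain ⟨hπc, hπs, hcomm⟩ := hfac
  obtain ⟨xs, ys, m, hm, hd, hx, hy⟩ := h
  have hsc : Function.Semiconj π f g := fun a => congrFun hcomm a
  have hsemi : ∀ n a, π (f^[n] a) = g^[n] (π a) := fun n a => (hsc.iterate_right n) a
  have hπu : UniformContinuous π := CompactSpace.uniformContinuous_of_continuous hπc
  have hueq : UniformEquicontinuous (fun n : ℕ => g^[n]) := CompactSpace.uniformEquicontinuous_of_equicontinuous heq
  have hlim : Tendsto (fun n => dist (π (f^[m n] (xs n))) (π (f^[m n] (ys n)))) atTop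
      (𝓝 (dist (π x) (π y))) :=
    Filter.Tendsto.dist ((hπc.tendsto x).comp hx) ((hπc.tendsto y).comp hy)
  have key : ∀ ε > (0 : ℝ), dist (π x) (π y) ≤ ε := by
    intro ε hε
    obtain ⟨δ, hδ, hδ'⟩ := Metric.uniformEquicontinuous_iff.mp hueq ε hε
    obtain ⟨δ', hδ'', hδ'''⟩ := Metric.uniformContinuous_iff.mp hπu δ hδ
    have hev : ∀ᶠ n in atTop, dist (xs n) (ys n) < δ' := by
      have := hd (Metric.ball_mem_nhds (0 : ℝ) hδ'')
      filter_upwards [this] with n hn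
      simpa [Real.dist_eq, abs_of_nonneg dist_nonneg] using hn
    refine le_of_tendsto hlim ?_
    filter_upwards [hev] with n hn
    have h1 : dist (π (xs n)) (π (ys n)) < δ := hδ''' hn
    have h2 := hδ' _ _ h1 (m n)
    rw [hsemi, hsemi]
    exact (h2).le
  have : dist (π x) (π y) ≤ 0 := le_of_forall_pos_le_add (by simpa using key)
  exact eq_of_dist_eq_zero (le_antisymm this dist_nonneg)
end

section
/- Let X be a locally connected continuum (nonempty compact connected locally connected metric space) and f : X → X a continuous surjection. Then for every x ∈ X, the set RP⁻(x) = {y ∈ X : (x,y) ∈ RP⁻(X,f)} is connected. -/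
open Metric Filter Topology Set

/-!
Fix `y ∈ RP⁻(x)`, witnessed by `xₙ, yₙ` with `d(xₙ, yₙ) → 0` and `f^{mₙ} xₙ → x`, `f^{mₙ} yₙ → y`.
Local connectedness of the compact space `X` is uniform, so along a subsequence `xₙ, yₙ` lie in a
connected set `Aₙ` of radius tending to `0`. The connected sets `Bₙ = f^{mₙ}(Aₙ)` have points
converging to `x`, so by a theorem of Kuratowski their topological upper limit is connected; it
contains `x` and `y`, and each of its points `z` is a limit of points `f^{mₙ}(uₙ)` with
`uₙ ∈ Aₙ`, which exhibits `(x, z) ∈ RP⁻`.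
-/

section UpperLimit

variable {X : Type*} [TopologicalSpace X]

/-- Kuratowski's topological upper limit `Ls Bₙ` of a sequence of sets. -/
def upperLimit (B : ℕ → Set X) : Set X :=
  ⋂ N, closure (⋃ k ≥ N, B k)

theorem isClosed_upperLimit (B : ℕ → Set X) : IsClosed (upperLimit B) :=
  isClosed_iInter fun _ => isClosed_closure

theorem mem_upperLimit_of_tendsto {B : ℕ → Set X} {φ : ℕ → ℕ} {w : ℕ → X} {z : X}
    (hφ : Tendsto φ atTop atTop) (hw : ∀ j, w j ∈ B (φ j)) (hwz : Tendsto w atTop (𝓝 z)) :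
    z ∈ upperLimit B :=
  mem_iInter.2 fun N => mem_closure_of_tendsto hwz <|
    (hφ.eventually_ge_atTop N).mono fun j hj => mem_biUnion hj (hw j)

theorem frequently_inter_nonempty_of_mem_upperLimit {B : ℕ → Set X} {z : X}
    (hz : z ∈ upperLimit B) {U : Set X} (hU : U ∈ 𝓝 z) :
    ∃ᶠ k in atTop, (B k ∩ U).Nonempty := by
  refine frequently_atTop.2 fun N => ?_
  obtain ⟨w, hwU, hw⟩ := mem_closure_iff_nhds.1 (mem_iInter.1 hz N) U hU
  obtain ⟨k, hk, hwB⟩ := mem_iUnion₂.1 hw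
  exact ⟨k, hk, w, hwB, hwU⟩

theorem eventually_subset_of_upperLimit_subset [CompactSpace X] {B : ℕ → Set X} {W : Set X}
    (hW : IsOpen W) (hBW : upperLimit B ⊆ W) : ∀ᶠ k in atTop, B k ⊆ W := by
  have hanti : Antitone fun N => closure (⋃ k ≥ N, B k) ∩ Wᶜ := fun M N hMN =>
    inter_subset_inter_left _ <| closure_mono <| biUnion_subset_biUnion_left fun k hk =>
      le_trans hMN hk
  obtain ⟨N, hN⟩ := isCompact_univ.elim_directed_family_closed _
    (fun N => isClosed_closure.inter hW.isClosed_compl)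
    (by rw [← iInter_inter, univ_inter]; exact sdiff_eq_empty.2 hBW)
    hanti.directed_ge
  rw [univ_inter] at hN
  refine eventually_atTop.2 ⟨N, fun k hk => ?_⟩
  exact (subset_closure.trans (sdiff_eq_empty.1 hN)).trans' (subset_biUnion_of_mem hk)

theorem isPreconnected_upperLimit [CompactSpace X] [T2Space X] {B : ℕ → Set X}
    (hB : ∀ k, IsPreconnected (B k)) {b : ℕ → X} (hb : ∀ k, b k ∈ B k) {x : X}
    (hbx : Tendsto b atTop (𝓝 x)) : IsPreconnected (upperLimit B) := by
  have hx : x ∈ upperLimit B := mem_upperLimit_of_tendsto tendsto_id hb hbx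
  have subset_of_mem : ∀ E F : Set X, IsClosed E → IsClosed F → upperLimit B ⊆ E ∪ F →
      Disjoint E F → x ∈ E → upperLimit B ⊆ E := by
    intro E F hE hF hEF hdisj hxE z hz
    by_contra hzE
    obtain ⟨P, Q, hP, hQ, hEP, hFQ, hPQ⟩ := normal_separation hE hF hdisj
    have hsub : ∀ᶠ k in atTop, B k ⊆ P ∪ Q :=
      eventually_subset_of_upperLimit_subset (hP.union hQ)
        (hEF.trans (union_subset_union hEP hFQ))
    have hmeetP : ∀ᶠ k in atTop, b k ∈ P := hbx (hP.mem_nhds (hEP hxE))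
    have hmeetQ : ∃ᶠ k in atTop, (B k ∩ Q).Nonempty :=
      frequently_inter_nonempty_of_mem_upperLimit hz
        (hQ.mem_nhds (hFQ ((hEF hz).resolve_left hzE)))
    obtain ⟨k, ⟨w, hwB, hwQ⟩, hkPQ, hkP⟩ := (hmeetQ.and_eventually (hsub.and hmeetP)).exists
    have hBP : B k ⊆ P := (hB k).subset_left_of_subset_union hP hQ hPQ hkPQ ⟨b k, hb k, hkP⟩
    exact disjoint_left.1 hPQ (hBP hwB) hwQ
  rw [isPreconnected_iff_subset_of_fully_disjoint_closed (isClosed_upperLimit B)]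
  intro E F hE hF hEF hdisj
  rcases hEF hx with hxE | hxF
  · exact Or.inl (subset_of_mem E F hE hF hEF hdisj hxE)
  · exact Or.inr (subset_of_mem F E hF hE (union_comm E F ▸ hEF) hdisj.symm hxF)

end UpperLimit

section Metric

variable {X : Type*} [MetricSpace X]

theorem exists_tendsto_of_mem_upperLimit {B : ℕ → Set X} {z : X} (hz : z ∈ upperLimit B) :
    ∃ (φ : ℕ → ℕ) (w : ℕ → X), (∀ j, j ≤ φ j) ∧ (∀ j, w j ∈ B (φ j)) ∧
      Tendsto w atTop (𝓝 z) := by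
  have hsel : ∀ j : ℕ, ∃ k ≥ j, ∃ w ∈ B k, dist w z < 1 / ((j : ℝ) + 1) := fun j => by
    obtain ⟨w, hw, hwz⟩ := Metric.mem_closure_iff.1 (mem_iInter.1 hz j) _ Nat.one_div_pos_of_nat
    obtain ⟨k, hk, hwB⟩ := mem_iUnion₂.1 hw
    exact ⟨k, hk, w, hwB, by rwa [dist_comm]⟩
  choose φ hφ w hwB hwz using hsel
  exact ⟨φ, w, hφ, hwB, tendsto_iff_dist_tendsto_zero.2 <| squeeze_zero (fun _ => dist_nonneg)
    (fun j => (hwz j).le) tendsto_one_div_add_atTop_nhds_zero_nat⟩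

theorem exists_isPreconnected_subset_ball_of_dist_lt [CompactSpace X] [LocallyConnectedSpace X]
    {ε : ℝ} (hε : 0 < ε) : ∃ δ > 0, ∀ a b : X, dist a b < δ →
      ∃ A : Set X, IsPreconnected A ∧ a ∈ A ∧ b ∈ A ∧ A ⊆ ball a ε := by
  obtain ⟨δ, hδ, hleb⟩ := lebesgue_number_lemma_of_metric (c := fun c : X =>
      connectedComponentIn (ball c (ε / 2)) c) isCompact_univ
    (fun c => isOpen_ball.connectedComponentIn)
    (fun c _ => mem_iUnion.2 ⟨c, mem_connectedComponentIn (mem_ball_self (half_pos hε))⟩)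
  refine ⟨δ, hδ, fun a b hab => ?_⟩
  obtain ⟨c, hc⟩ := hleb a (mem_univ a)
  refine ⟨_, isPreconnected_connectedComponentIn, hc (mem_ball_self hδ),
    hc (mem_ball_comm.1 hab), fun u hu => ?_⟩
  have hu : dist u c < ε / 2 := connectedComponentIn_subset (ball c (ε / 2)) c hu
  have ha : dist a c < ε / 2 := connectedComponentIn_subset (ball c (ε / 2)) c (hc (mem_ball_self hδ))
  show dist u a < ε
  calc dist u a ≤ dist u c + dist a c := dist_triangle_right _ _ _
    _ < ε := by linarith

end Metric

section RPminus

variable {X : Type*} [MetricSpace X] {f : X → X}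

theorem RPminus.refl_of_surjective (hf : Function.Surjective f) (x : X) : RPminus f x x := by
  choose u hu using fun n => hf.iterate n x
  refine ⟨u, u, id, tendsto_id, ?_, ?_, ?_⟩ <;> simp [hu]

theorem RPminus.of_mem_upperLimit {A : ℕ → Set X} {a : ℕ → X} {r : ℕ → ℝ} {m : ℕ → ℕ} {x z : X}
    (hm : Tendsto m atTop atTop) (hr : Tendsto r atTop (𝓝 0))
    (hA : ∀ k, A k ⊆ ball (a k) (r k)) (hx : Tendsto (fun k => f^[m k] (a k)) atTop (𝓝 x))
    (hz : z ∈ upperLimit fun k => f^[m k] '' A k) : RPminus f x z := by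
  obtain ⟨φ, w, hφle, hwB, hwz⟩ := exists_tendsto_of_mem_upperLimit hz
  choose u huA hu using hwB
  have hφ : Tendsto φ atTop atTop := tendsto_atTop_mono hφle tendsto_id
  refine ⟨a ∘ φ, u, m ∘ φ, hm.comp hφ, ?_, hx.comp hφ, ?_⟩
  · exact squeeze_zero (fun _ => dist_nonneg) (fun j => (mem_ball'.1 (hA _ (huA j))).le)
      (hr.comp hφ)
  · simpa only [Function.comp_apply, hu] using hwz

theorem exists_subseq_isPreconnected_of_tendsto_dist [CompactSpace X] [LocallyConnectedSpace X]
    {a b : ℕ → X} (h : Tendsto (fun n => dist (a n) (b n)) atTop (𝓝 0)) :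
    ∃ (φ : ℕ → ℕ) (A : ℕ → Set X), Tendsto φ atTop atTop ∧ ∀ k, IsPreconnected (A k) ∧
      a (φ k) ∈ A k ∧ b (φ k) ∈ A k ∧ A k ⊆ ball (a (φ k)) (1 / ((k : ℝ) + 1)) := by
  have hsel : ∀ k : ℕ, ∃ n ≥ k, ∃ A : Set X, IsPreconnected A ∧ a n ∈ A ∧ b n ∈ A ∧
      A ⊆ ball (a n) (1 / ((k : ℝ) + 1)) := fun k => by
    obtain ⟨δ, hδ, hA⟩ := exists_isPreconnected_subset_ball_of_dist_lt (X := X)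
      (Nat.one_div_pos_of_nat (n := k))
    obtain ⟨n, hnk, hn⟩ := ((eventually_ge_atTop k).and (h.eventually (gt_mem_nhds hδ))).exists
    exact ⟨n, hnk, hA _ _ hn⟩
  choose φ hφ A hA using hsel
  exact ⟨φ, A, tendsto_atTop_mono hφ tendsto_id, hA⟩

end RPminus

theorem stmt1_general {X : Type*} [MetricSpace X] [CompactSpace X]
    [LocallyConnectedSpace X]
    (f : X → X) (hf : Continuous f) (hsurj : Function.Surjective f)
    (x : X) : IsConnected {y | RPminus f x y} := by
  refine ⟨⟨x, RPminus.refl_of_surjective hsurj x⟩, isPreconnected_of_forall x fun y hy => ?_⟩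
  obtain ⟨xs, ys, m, hm, hd, hx, hy⟩ := hy
  obtain ⟨φ, A, hφ, hA⟩ := exists_subseq_isPreconnected_of_tendsto_dist hd
  choose hAconn hxA hyA hAball using hA
  set B : ℕ → Set X := fun k => f^[m (φ k)] '' A k
  have hB : ∀ k, IsPreconnected (B k) := fun k =>
    (hAconn k).image _ (hf.iterate _).continuousOn
  have hxB : ∀ k, f^[m (φ k)] (xs (φ k)) ∈ B k := fun k => mem_image_of_mem _ (hxA k)
  have hyB : ∀ k, f^[m (φ k)] (ys (φ k)) ∈ B k := fun k => mem_image_of_mem _ (hyA k)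
  refine ⟨upperLimit B, fun z hz => ?_, mem_upperLimit_of_tendsto tendsto_id hxB (hx.comp hφ),
    mem_upperLimit_of_tendsto tendsto_id hyB (hy.comp hφ), isPreconnected_upperLimit hB hxB
    (hx.comp hφ)⟩
  exact RPminus.of_mem_upperLimit (hm.comp hφ) tendsto_one_div_add_atTop_nhds_zero_nat hAball
    (hx.comp hφ) hz

/-- on a locally connected continuum, RP⁻(x) is connected. -/
theorem stmt1 {X : Type*} [MetricSpace X] [CompactSpace X] [ConnectedSpace X]
    [LocallyConnectedSpace X]
    (f : X → X) (hf : Continuous f) (hsurj : Function.Surjective f)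
    (x : X) : IsConnected {y | RPminus f x y} :=
  stmt1_general f hf hsurj x
end

section
/- Let X be a locally connected continuum and f : X → X a continuous surjection. Then for every x ∈ X, the equivalence class S_eq(x) of x under the maximal equicontinuous factor relation is connected; equivalently, the factor map from (X,f) onto its maximal equicontinuous factor is monotone. -/
open Metric Filter Topology Set

section MyAux

variable {X : Type*} [MetricSpace X] [CompactSpace X]

/-- Uniform local connectedness of a compact, locally connected metric space. -/
lemma my_ulc [LocallyConnectedSpace X] {η : ℝ} (hη : 0 < η) :
    ∃ δ > (0 : ℝ), ∀ a b : X, dist a b < δ →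
      ∃ M : Set X, IsPreconnected M ∧ a ∈ M ∧ b ∈ M ∧ ∀ z ∈ M, dist z a < η := by
  obtain ⟨δ, hδ, H⟩ := lebesgue_number_lemma_of_metric (isCompact_univ (X := X))
    (c := fun p : X => connectedComponentIn (ball p (η / 2)) p)
    (fun p => isOpen_ball.connectedComponentIn)
    (fun z _ => Set.mem_iUnion.2 ⟨z, mem_connectedComponentIn (mem_ball_self (half_pos hη))⟩)
  refine ⟨δ, hδ, fun a b hab => ?_⟩
  obtain ⟨p, hp⟩ := H a (Set.mem_univ a)
  have haM : a ∈ connectedComponentIn (ball p (η / 2)) p := hp (mem_ball_self hδ)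
  refine ⟨connectedComponentIn (ball p (η / 2)) p, isPreconnected_connectedComponentIn,
    haM, hp (by rwa [mem_ball, dist_comm]), fun z hz => ?_⟩
  have h1 : dist z p < η / 2 := mem_ball.1 (connectedComponentIn_subset _ _ hz)
  have h2 : dist a p < η / 2 := mem_ball.1 (connectedComponentIn_subset _ _ haM)
  calc dist z a ≤ dist z p + dist p a := dist_triangle _ _ _
    _ < η / 2 + η / 2 := by rw [dist_comm p a]; exact add_lt_add h1 h2
    _ = η := add_halves η

lemma my_isCompact_cci {F : Set X} (hF : IsClosed F) (x : X) :
    IsCompact (connectedComponentIn F x) := by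
  by_cases hx : x ∈ F
  · rw [connectedComponentIn_eq_image hx]
    haveI : CompactSpace F := isCompact_iff_compactSpace.mp hF.isCompact
    exact isClosed_connectedComponent.isCompact.image continuous_subtype_val
  · rw [connectedComponentIn_eq_empty hx]
    exact isCompact_empty

/-- A downward-directed family of subcontinua has connected intersection. -/
lemma my_isConnected_sInter {S : Set (Set X)} (hne : S.Nonempty)
    (hcc : ∀ C ∈ S, IsCompact C ∧ IsConnected C)
    (hdir : ∀ C₁ ∈ S, ∀ C₂ ∈ S, ∃ C₃ ∈ S, C₃ ⊆ C₁ ∩ C₂) :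
    IsConnected (⋂₀ S) := by
  haveI : Nonempty ↥S := hne.to_subtype
  have hdir' : Directed (· ⊇ ·) (fun C : S => (C : Set X)) := by
    intro i j
    obtain ⟨C₃, hC₃S, hsub⟩ := hdir i i.2 j j.2
    exact ⟨⟨C₃, hC₃S⟩, fun z hz => (hsub hz).1, fun z hz => (hsub hz).2⟩
  have hsEq : ⋂₀ S = ⋂ C : S, (C : Set X) := Set.sInter_eq_iInter
  have hTclosed : IsClosed (⋂₀ S) :=
    isClosed_sInter fun C hC => (hcc C hC).1.isClosed
  have hTcomp : IsCompact (⋂₀ S) := hTclosed.isCompact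
  have hTne : (⋂₀ S).Nonempty := by
    rw [hsEq]
    exact IsCompact.nonempty_iInter_of_directed_nonempty_isCompact_isClosed _ hdir'
      (fun i => (hcc i i.2).2.nonempty) (fun i => (hcc i i.2).1)
      (fun i => (hcc i i.2).1.isClosed)
  refine ⟨hTne, ?_⟩
  intro U V hU hV hsub hU' hV'
  obtain ⟨a, haT, haU⟩ := hU'
  obtain ⟨b, hbT, hbV⟩ := hV'
  by_contra hcon
  have hconE : ⋂₀ S ∩ (U ∩ V) = ∅ := Set.not_nonempty_iff_eq_empty.mp hcon
  have hK1 : IsCompact (⋂₀ S \ V) := hTcomp.diff hV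
  have hK2 : IsCompact (⋂₀ S \ U) := hTcomp.diff hU
  have hK2cl : IsClosed (⋂₀ S \ U) := hTclosed.sdiff hU
  have hdis : Disjoint (⋂₀ S \ V) (⋂₀ S \ U) := by
    rw [Set.disjoint_left]
    intro z hz1 hz2
    rcases hsub hz1.1 with h | h
    exacts [hz2.2 h, hz1.2 h]
  obtain ⟨U₀, V₀, hU₀, hV₀, hsubU₀, hsubV₀, hd⟩ :=
    SeparatedNhds.of_isCompact_isCompact_isClosed hK1 hK2 hK2cl hdis
  have hTW : ⋂₀ S ⊆ U₀ ∪ V₀ := by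
    intro z hz
    by_cases hzU : z ∈ U
    · by_cases hzV : z ∈ V
      · exact absurd ⟨hz, hzU, hzV⟩ (Set.eq_empty_iff_forall_notMem.mp hconE z)
      · exact Or.inl (hsubU₀ ⟨hz, hzV⟩)
    · exact Or.inr (hsubV₀ ⟨hz, hzU⟩)
  have hnall : ¬ ∀ i : S, ((i : Set X) \ (U₀ ∪ V₀)).Nonempty := by
    intro hall
    have hd2 : Directed (· ⊇ ·) (fun i : S => (i : Set X) \ (U₀ ∪ V₀)) := by
      intro i j
      obtain ⟨k, h1, h2⟩ := hdir' i j
      exact ⟨k, fun z hz => ⟨h1 hz.1, hz.2⟩, fun z hz => ⟨h2 hz.1, hz.2⟩⟩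
    have hW : IsOpen (U₀ ∪ V₀) := hU₀.union hV₀
    obtain ⟨z, hz⟩ := IsCompact.nonempty_iInter_of_directed_nonempty_isCompact_isClosed
      (fun i : S => (i : Set X) \ (U₀ ∪ V₀)) hd2 hall
      (fun i => (hcc i i.2).1.diff hW)
      (fun i => ((hcc i i.2).1.isClosed).sdiff hW)
    have hzT : z ∈ ⋂₀ S := by
      rw [hsEq]
      exact Set.mem_iInter.2 fun i => (Set.mem_iInter.1 hz i).1
    obtain ⟨i⟩ := (inferInstance : Nonempty ↥S)
    exact (Set.mem_iInter.1 hz i).2 (hTW hzT)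
  rw [not_forall] at hnall
  obtain ⟨i, hi⟩ := hnall
  have hiW : (i : Set X) ⊆ U₀ ∪ V₀ :=
    Set.diff_eq_empty.mp (Set.not_nonempty_iff_eq_empty.mp hi)
  have haC : a ∈ (i : Set X) := Set.sInter_subset_of_mem i.2 haT
  have hbC : b ∈ (i : Set X) := Set.sInter_subset_of_mem i.2 hbT
  have haU₀ : a ∈ U₀ := by
    refine hsubU₀ ⟨haT, fun haV => ?_⟩
    exact Set.eq_empty_iff_forall_notMem.mp hconE a ⟨haT, haU, haV⟩
  have hbV₀ : b ∈ V₀ := by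
    refine hsubV₀ ⟨hbT, fun hbU => ?_⟩
    exact Set.eq_empty_iff_forall_notMem.mp hconE b ⟨hbT, hbU, hbV⟩
  obtain ⟨z, _, hzU₀, hzV₀⟩ :=
    (hcc i i.2).2.2 U₀ V₀ hU₀ hV₀ hiW ⟨a, haC, haU₀⟩ ⟨b, hbC, hbV₀⟩
  exact Set.disjoint_left.mp hd hzU₀ hzV₀

/-- From `SeqRel` and a single real-valued function with equicontinuous orbit family,
deduce agreement, via the shift factor on bounded sequences. -/
lemma my_seqrel_apply (f : X → X) (x y : X) (hy : SeqRel f x y)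
    (ψ : X → ℝ) (hψ : Equicontinuous fun n : ℕ => ψ ∘ f^[n]) : ψ x = ψ y := by
  have hcont : Continuous ψ := by simpa using hψ.continuous 0
  obtain ⟨Mu, hMu⟩ := (isCompact_range hcont).bddAbove
  obtain ⟨Ml, hMl⟩ := (isCompact_range hcont).bddBelow
  have hbd : ∀ u v : X, dist (ψ u) (ψ v) ≤ Mu - Ml := by
    intro u v
    rw [Real.dist_eq, abs_sub_le_iff]
    constructor <;>
      linarith [hMu (Set.mem_range_self (f := ψ) u), hMl (Set.mem_range_self (f := ψ) u),
        hMu (Set.mem_range_self (f := ψ) v), hMl (Set.mem_range_self (f := ψ) v)]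
  have hψu := Metric.uniformEquicontinuous_iff.1
    (CompactSpace.uniformEquicontinuous_of_equicontinuous hψ)
  let Φ : X → (BoundedContinuousFunction ℕ ℝ) := fun z =>
    ⟨⟨fun n => ψ (f^[n] z), continuous_of_discreteTopology⟩, Mu - Ml, fun n m => hbd _ _⟩
  have hΦapp : ∀ (z : X) (n : ℕ), Φ z n = ψ (f^[n] z) := fun _ _ => rfl
  have hΦc : Continuous Φ := by
    rw [Metric.continuous_iff]
    intro z ε hε
    obtain ⟨δ, hδ, hδ'⟩ := hψu (ε / 2) (half_pos hε)
    refine ⟨δ, hδ, fun w hw => ?_⟩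
    have hle : dist (Φ w) (Φ z) ≤ ε / 2 :=
      (BoundedContinuousFunction.dist_le (half_pos hε).le).2 fun n => (hδ' w z hw n).le
    linarith
  have hYc : IsCompact (Set.range Φ) := isCompact_range hΦc
  haveI : CompactSpace ↥(Set.range Φ) := isCompact_iff_compactSpace.mp hYc
  let σ : C(ℕ, ℕ) := ⟨Nat.succ, continuous_of_discreteTopology⟩
  have hshift : ∀ z : X, (Φ z).compContinuous σ = Φ (f z) := by
    intro z
    ext n
    rw [BoundedContinuousFunction.compContinuous_apply, hΦapp, hΦapp]
    show ψ (f^[n + 1] z) = ψ (f^[n] (f z))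
    rw [Function.iterate_succ_apply]
  let g : ↥(Set.range Φ) → ↥(Set.range Φ) := fun u =>
    ⟨(u : BoundedContinuousFunction ℕ ℝ).compContinuous σ, by
      obtain ⟨z, hz⟩ := u.2
      exact ⟨f z, by rw [← hz, hshift z]⟩⟩
  have hgl : LipschitzWith 1 g := by
    apply LipschitzWith.of_dist_le_mul
    intro u v
    have h := (BoundedContinuousFunction.lipschitz_compContinuous (β := ℝ) σ).dist_le_mul
      (u : BoundedContinuousFunction ℕ ℝ) (v : BoundedContinuousFunction ℕ ℝ)
    simpa [g, Subtype.dist_eq] using h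
  have hgE : Equicontinuous fun n : ℕ => g^[n] := by
    intro u
    rw [Metric.equicontinuousAt_iff]
    intro ε hε
    refine ⟨ε, hε, fun v hv n => ?_⟩
    have h1 : LipschitzWith 1 g^[n] := by simpa using hgl.iterate n
    calc dist (g^[n] u) (g^[n] v) ≤ 1 * dist u v := by
          simpa using h1.dist_le_mul u v
      _ = dist v u := by rw [one_mul, dist_comm]
      _ < ε := hv
  let π : X → ↥(Set.range Φ) := fun z => ⟨Φ z, Set.mem_range_self z⟩
  have hfac : IsFactorMap f g π := by
    refine ⟨hΦc.subtype_mk _, fun u => ?_, funext fun z => Subtype.ext ?_⟩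
    · obtain ⟨z, hz⟩ := u.2
      exact ⟨z, Subtype.ext hz⟩
    · exact (hshift z).symm
  have hxy := hy ↥(Set.range Φ) inferInstance inferInstance g π hgl.continuous hgE hfac
  have hΦxy : Φ x = Φ y := Subtype.ext_iff.mp hxy
  have h0 : Φ x 0 = Φ y 0 := by rw [hΦxy]
  simpa [hΦapp] using h0

/-- Key lemma: a `SeqRel`-related point lies in the connected component of `x`
inside every sublevel set of an "adapted" function. -/
lemma my_key [ConnectedSpace X] [LocallyConnectedSpace X]
    (f : X → X) (hf : Continuous f) (x : X)
    (θ : X → ℝ) (hθE : Equicontinuous fun n : ℕ => θ ∘ f^[n])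
    (hθ0 : ∀ z, 0 ≤ θ z) (hθx : θ x = 0) {y : X} (hy : SeqRel f x y)
    {ε : ℝ} (hε : 0 < ε) : y ∈ connectedComponentIn {z | θ z ≤ ε} x := by
  have hθc : Continuous θ := by simpa using hθE.continuous 0
  set S : X → Set ℝ := fun w =>
    {r | ∃ K : Set X, IsPreconnected K ∧ x ∈ K ∧ w ∈ K ∧ ∀ z ∈ K, θ z ≤ r} with hSdef
  obtain ⟨Mb, hMb⟩ := (isCompact_range hθc).bddAbove
  have hSne : ∀ w, (S w).Nonempty := fun w =>
    ⟨Mb, Set.univ, isPreconnected_univ, Set.mem_univ x, Set.mem_univ w,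
      fun z _ => hMb (Set.mem_range_self z)⟩
  have hSbdd : ∀ w, BddBelow (S w) := by
    intro w
    refine ⟨0, ?_⟩
    rintro r ⟨K, -, -, hwK, hbd⟩
    exact (hθ0 w).trans (hbd w hwK)
  set ψ : X → ℝ := fun w => sInf (S w) with hψdef
  have hψ0 : ∀ w, 0 ≤ ψ w := by
    intro w
    refine le_csInf (hSne w) ?_
    rintro r ⟨K, -, -, hwK, hbd⟩
    exact (hθ0 w).trans (hbd w hwK)
  have hψx : ψ x = 0 := by
    refine le_antisymm (csInf_le (hSbdd x) ?_) (hψ0 x)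
    exact ⟨{x}, isPreconnected_singleton, rfl, rfl,
      fun z hz => by rw [Set.mem_singleton_iff] at hz; rw [hz, hθx]⟩
  have key_est : ∀ ε' > (0 : ℝ), ∃ δ > (0 : ℝ), ∀ a b : X, dist a b < δ →
      ∀ m : ℕ, ψ (f^[m] a) ≤ ψ (f^[m] b) + ε' := by
    intro ε' hε'
    obtain ⟨δ₀, hδ₀, hδ₀'⟩ := Metric.uniformEquicontinuous_iff.1
      (CompactSpace.uniformEquicontinuous_of_equicontinuous hθE) ε' hε'
    obtain ⟨δ₁, hδ₁, hδ₁'⟩ := my_ulc (X := X) (half_pos hδ₀)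
    refine ⟨min δ₁ (δ₀ / 2), lt_min hδ₁ (half_pos hδ₀), fun a b hab m => ?_⟩
    obtain ⟨M, hMpre, haM, hbM, hM⟩ := hδ₁' a b (hab.trans_le (min_le_left _ _))
    have hMb' : ∀ z ∈ M, dist z b < δ₀ := by
      intro z hz
      calc dist z b ≤ dist z a + dist a b := dist_triangle _ _ _
        _ < δ₀ / 2 + δ₀ / 2 := add_lt_add (hM z hz) (hab.trans_le (min_le_right _ _))
        _ = δ₀ := add_halves δ₀
    have step : ∀ r ∈ S (f^[m] b), ψ (f^[m] a) ≤ r + ε' := by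
      rintro r ⟨K, hKpre, hxK, hbK, hKbd⟩
      refine csInf_le (hSbdd _) ⟨K ∪ f^[m] '' M,
        IsPreconnected.union (f^[m] b) hbK (Set.mem_image_of_mem _ hbM) hKpre
          (hMpre.image _ (hf.iterate m).continuousOn),
        Or.inl hxK, Or.inr (Set.mem_image_of_mem _ haM), ?_⟩
      rintro w (hw | ⟨z, hzM, rfl⟩)
      · linarith [hKbd w hw]
      · have h1 := hδ₀' z b (hMb' z hzM) m
        simp only [Function.comp_apply, Real.dist_eq] at h1
        have h2 : θ (f^[m] z) - θ (f^[m] b) < ε' := (le_abs_self _).trans_lt h1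
        have h3 := hKbd _ hbK
        linarith
    have hlow : ψ (f^[m] a) - ε' ≤ ψ (f^[m] b) :=
      le_csInf (hSne _) fun r hr => by linarith [step r hr]
    linarith
  have hψE : Equicontinuous fun m : ℕ => ψ ∘ f^[m] := by
    intro a
    rw [Metric.equicontinuousAt_iff]
    intro ε'' hε''
    obtain ⟨δ, hδ, hest⟩ := key_est (ε'' / 2) (half_pos hε'')
    refine ⟨δ, hδ, fun b hb m => ?_⟩
    have h1 := hest a b (by rwa [dist_comm] at hb) m
    have h2 := hest b a hb m
    have habs : |ψ (f^[m] a) - ψ (f^[m] b)| ≤ ε'' / 2 :=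
      abs_sub_le_iff.2 ⟨by linarith, by linarith⟩
    calc dist ((ψ ∘ f^[m]) a) ((ψ ∘ f^[m]) b) = |ψ (f^[m] a) - ψ (f^[m] b)| := by
          simp [Real.dist_eq]
      _ ≤ ε'' / 2 := habs
      _ < ε'' := half_lt_self hε''
  have hψy : ψ y = 0 := by
    have h := my_seqrel_apply f x y hy ψ hψE
    rw [← h, hψx]
  obtain ⟨r, hrS, hrε⟩ := exists_lt_of_csInf_lt (hSne y)
    (show sInf (S y) < ε by rw [show sInf (S y) = ψ y from rfl, hψy]; exact hε)
  obtain ⟨K, hKpre, hxK, hyK, hbd⟩ := hrS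
  exact hKpre.subset_connectedComponentIn hxK
    (fun z hz => le_trans (hbd z hz) hrε.le) hyK

end MyAux

/-- on a locally connected continuum, each class of the maximal
equicontinuous factor relation is connected (the factor map is monotone). -/
theorem stmt2 {X : Type*} [MetricSpace X] [CompactSpace X] [ConnectedSpace X]
    [LocallyConnectedSpace X]
    (f : X → X) (hf : Continuous f) (hsurj : Function.Surjective f)
    (x : X) : IsConnected {y | SeqRel f x y} := by
  classical
  set S : Set (Set X) := {C | ∃ θ : X → ℝ, Equicontinuous (fun n : ℕ => θ ∘ f^[n]) ∧
    (∀ z, 0 ≤ θ z) ∧ θ x = 0 ∧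
    ∃ ε : ℝ, 0 < ε ∧ C = connectedComponentIn {z | θ z ≤ ε} x} with hSdef
  have hzeroE : Equicontinuous fun n : ℕ => (fun _ : X => (0 : ℝ)) ∘ f^[n] := by
    intro a
    rw [Metric.equicontinuousAt_iff]
    intro ε hε
    exact ⟨1, one_pos, fun b _ n => by simpa using hε⟩
  have hSne : S.Nonempty :=
    ⟨connectedComponentIn {z : X | (0 : ℝ) ≤ 1} x,
      (fun _ : X => (0 : ℝ)), hzeroE, fun z => le_refl 0, rfl, 1, one_pos, rfl⟩
  have hcc : ∀ C ∈ S, IsCompact C ∧ IsConnected C := by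
    rintro C ⟨θ, hθE, hθ0, hθx, ε, hε, rfl⟩
    have hθc : Continuous θ := by simpa using hθE.continuous 0
    have hcl : IsClosed {z : X | θ z ≤ ε} := isClosed_le hθc continuous_const
    have hxmem : x ∈ {z : X | θ z ≤ ε} := by
      show θ x ≤ ε
      rw [hθx]; exact hε.le
    exact ⟨my_isCompact_cci hcl x, isConnected_connectedComponentIn_iff.2 hxmem⟩
  have hdir : ∀ C₁ ∈ S, ∀ C₂ ∈ S, ∃ C₃ ∈ S, C₃ ⊆ C₁ ∩ C₂ := by
    rintro C₁ ⟨θ₁, h1E, h10, h1x, ε₁, hε₁, rfl⟩ C₂ ⟨θ₂, h2E, h20, h2x, ε₂, hε₂, rfl⟩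
    have hsumE : Equicontinuous fun n : ℕ => (fun z => θ₁ z + θ₂ z) ∘ f^[n] := by
      intro a
      rw [Metric.equicontinuousAt_iff]
      intro ε hε
      obtain ⟨δ₁, hδ₁, h1⟩ := Metric.equicontinuousAt_iff.1 (h1E a) (ε / 2) (half_pos hε)
      obtain ⟨δ₂, hδ₂, h2⟩ := Metric.equicontinuousAt_iff.1 (h2E a) (ε / 2) (half_pos hε)
      refine ⟨min δ₁ δ₂, lt_min hδ₁ hδ₂, fun b hb n => ?_⟩
      have e1 := h1 b (hb.trans_le (min_le_left _ _)) n
      have e2 := h2 b (hb.trans_le (min_le_right _ _)) n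
      simp only [Function.comp_apply, Real.dist_eq] at e1 e2 ⊢
      calc |θ₁ (f^[n] a) + θ₂ (f^[n] a) - (θ₁ (f^[n] b) + θ₂ (f^[n] b))|
          = |(θ₁ (f^[n] a) - θ₁ (f^[n] b)) + (θ₂ (f^[n] a) - θ₂ (f^[n] b))| := by ring_nf
        _ ≤ |θ₁ (f^[n] a) - θ₁ (f^[n] b)| + |θ₂ (f^[n] a) - θ₂ (f^[n] b)| := abs_add_le _ _
        _ < ε := by linarith
    refine ⟨connectedComponentIn {z : X | θ₁ z + θ₂ z ≤ min ε₁ ε₂} x,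
      ⟨fun z => θ₁ z + θ₂ z, hsumE, fun z => add_nonneg (h10 z) (h20 z),
        by simp [h1x, h2x], min ε₁ ε₂, lt_min hε₁ hε₂, rfl⟩, ?_⟩
    refine Set.subset_inter (connectedComponentIn_mono x ?_) (connectedComponentIn_mono x ?_)
    · intro z hz
      have hz' : θ₁ z + θ₂ z ≤ min ε₁ ε₂ := hz
      show θ₁ z ≤ ε₁
      have := min_le_left ε₁ ε₂
      linarith [h20 z]
    · intro z hz
      have hz' : θ₁ z + θ₂ z ≤ min ε₁ ε₂ := hz
      show θ₂ z ≤ ε₂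
      have := min_le_right ε₁ ε₂
      linarith [h10 z]
  have hAeq : {y | SeqRel f x y} = ⋂₀ S := by
    apply Set.Subset.antisymm
    · intro y hyA
      rw [Set.mem_sInter]
      rintro C ⟨θ, hθE, hθ0, hθx, ε, hε, rfl⟩
      exact my_key f hf x θ hθE hθ0 hθx hyA hε
    · intro y hyS
      intro Y mY cY g π hgc hgE hfac
      obtain ⟨hπc, hπs, hcomm⟩ := hfac
      have hπf : ∀ z, π (f z) = g (π z) := fun z => congrFun hcomm z
      have hsc : ∀ (n : ℕ) (z : X), π (f^[n] z) = g^[n] (π z) := by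
        intro n
        induction n with
        | zero => intro z; simp
        | succ n ih =>
          intro z
          rw [Function.iterate_succ_apply, ih (f z), hπf z]
          exact (Function.iterate_succ_apply g n (π z)).symm
      set θ : X → ℝ := fun z => dist (π z) (π x) with hθdef
      have hθE : Equicontinuous fun n : ℕ => θ ∘ f^[n] := by
        have hgu := Metric.uniformEquicontinuous_iff.1
          (CompactSpace.uniformEquicontinuous_of_equicontinuous hgE)
        have hπu := Metric.uniformContinuous_iff.1
          (CompactSpace.uniformContinuous_of_continuous hπc)
        intro a
        rw [Metric.equicontinuousAt_iff]
        intro ε hε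
        obtain ⟨δ', hδ', hgδ⟩ := hgu ε hε
        obtain ⟨δ, hδ, hπδ⟩ := hπu δ' hδ'
        refine ⟨δ, hδ, fun b hb n => ?_⟩
        have h1 : dist (π b) (π a) < δ' := hπδ hb
        have h2 : dist (g^[n] (π b)) (g^[n] (π a)) < ε := hgδ _ _ h1 n
        simp only [Function.comp_apply, Real.dist_eq, hθdef]
        rw [hsc n a, hsc n b]
        calc |dist (g^[n] (π a)) (π x) - dist (g^[n] (π b)) (π x)|
            ≤ dist (g^[n] (π a)) (g^[n] (π b)) := abs_dist_sub_le _ _ _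
          _ < ε := by rwa [dist_comm]
      have hθy : ∀ ε : ℝ, 0 < ε → θ y ≤ ε := by
        intro ε hε
        have hyC := Set.mem_sInter.1 hyS (connectedComponentIn {z : X | θ z ≤ ε} x)
          ⟨θ, hθE, fun z => dist_nonneg, by simp [hθdef], ε, hε, rfl⟩
        exact (connectedComponentIn_subset {z : X | θ z ≤ ε} x) hyC
      have hθy0 : θ y ≤ 0 := by
        by_contra h
        push_neg at h
        have := hθy (θ y / 2) (by linarith)
        linarith
      have : π y = π x := by
        have : dist (π y) (π x) ≤ 0 := hθy0
        rwa [dist_le_zero] at this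
      exact this.symm
  rw [hAeq]
  exact my_isConnected_sInter hSne hcc hdir
end

section
/- Let X be a hereditarily locally connected continuum and π : X → S¹ a monotone continuous surjection such that π⁻¹(x) has empty interior for every x ∈ S¹. Then π is a homeomorphism; in particular X is homeomorphic to the circle. -/
open Metric Filter Topology Set

/-!
If a fibre `π⁻¹{s}` had two points, then, fibres having empty interior, two distinct points `a`,
`b` of it would be approached from the same side of `s`: by points mapped into `γ (0, δ)` for
every `δ > 0`, where `γ t = s * exp (± i t)`. Choose arcs `γ [s n, t n]`, each separated from the
next by a gap, whose preimages `Q n` (connected, as `π` is monotone) meet a small connected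
neighbourhood `U` of `a` and contain points `y n → b`. The continuum `closure (U ∪ ⋃ n, Q n)` is
then not locally connected at `b`: a connected neighbourhood of `b` in it that avoids
`closure U` lies in `closure (⋃ n, Q n)`, hence in the preimage of the two closed arcs on either
side of any one gap, and for large `n` it contains `y n` and `y (n + 1)`, one on each side.
So `π` is injective, and a continuous bijection from a compact space onto the circle is a
homeomorphism.
-/

theorem exists_seq_interleaved {S T : ℕ → Set ℝ}
    (hS : ∀ n, ∀ δ > 0, (S n ∩ Ioo 0 δ).Nonempty) (hT : ∀ n, ∀ δ > 0, (T n ∩ Ioo 0 δ).Nonempty) :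
    ∃ s t : ℕ → ℝ, ∀ n, s n ∈ S n ∩ Ioc 0 1 ∧ t n ∈ T n ∩ Ioc 0 1 ∧
      max (s (n + 1)) (t (n + 1)) < min (s n) (t n) := by
  choose! f hf using hS
  choose! g hg using hT
  let δ : ℕ → ℝ := fun n => Nat.rec 1 (fun k d => min (f k d) (g k d)) n
  have hδ : ∀ n, 0 < δ n ∧ δ n ≤ 1 := by
    intro n
    induction n with
    | zero => exact ⟨one_pos, le_rfl⟩
    | succ k ih =>
      have hfk := (hf k _ ih.1).2
      have hgk := (hg k _ ih.1).2
      exact ⟨lt_min hfk.1 hgk.1, (min_le_left _ _).trans (hfk.2.le.trans ih.2)⟩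
  refine ⟨fun n => f n (δ n), fun n => g n (δ n), fun n => ?_⟩
  obtain ⟨hfn, hfδ⟩ := hf n _ (hδ n).1
  obtain ⟨hgn, hgδ⟩ := hg n _ (hδ n).1
  obtain ⟨-, hfδ'⟩ := hf (n + 1) _ (hδ (n + 1)).1
  obtain ⟨-, hgδ'⟩ := hg (n + 1) _ (hδ (n + 1)).1
  exact ⟨⟨hfn, hfδ.1, hfδ.2.le.trans (hδ n).2⟩, ⟨hgn, hgδ.1, hgδ.2.le.trans (hδ n).2⟩,
    max_lt hfδ'.2 hgδ'.2⟩

theorem uIcc_subset_Icc_union_Icc_of_interleaved {s t : ℕ → ℝ}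
    (hs : ∀ n, s n ∈ Ioc 0 1) (ht : ∀ n, t n ∈ Ioc 0 1)
    (hstep : ∀ n, max (s (n + 1)) (t (n + 1)) < min (s n) (t n)) (m n : ℕ) :
    uIcc (s m) (t m) ⊆ Icc 0 (max (s (n + 1)) (t (n + 1))) ∪ Icc (min (s n) (t n)) 1 := by
  have hmax : Antitone fun k => max (s k) (t k) :=
    antitone_nat_of_succ_le fun k => (hstep k).le.trans min_le_max
  have hmin : Antitone fun k => min (s k) (t k) :=
    antitone_nat_of_succ_le fun k => min_le_max.trans (hstep k).le
  rcases le_or_gt m n with hmn | hnm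
  · exact subset_union_of_subset_right
      (Icc_subset_Icc (hmin hmn) (max_le (hs m).2 (ht m).2)) _
  · exact subset_union_of_subset_left
      (Icc_subset_Icc (le_min (hs m).1.le (ht m).1.le) (hmax hnm)) _

section

variable {X Y : Type*} [TopologicalSpace X]

theorem MonotoneFibers.isConnected_preimage [CompactSpace X] [TopologicalSpace Y] [T2Space Y]
    {π : X → Y} (hm : MonotoneFibers π) (hc : Continuous π) {C : Set Y} (hC : IsClosed C)
    (hCc : IsConnected C) : IsConnected (π ⁻¹' C) :=
  (hc.isClosedMap.isQuotientMap hc fun y => (hm y).nonempty).isCoinducing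
    |>.isConnected_preimage_of_isClosed hm hC hCc

theorem HereditarilyLocallyConnected.exists_isPreconnected_mem_nhdsWithin
    (hX : HereditarilyLocallyConnected X) {M : Set X} (hMc : IsCompact M) (hM : IsConnected M)
    {b : X} (hb : b ∈ M) {N : Set X} (hN : N ∈ 𝓝 b) :
    ∃ V ∈ 𝓝[M] b, IsPreconnected V ∧ V ⊆ M ∩ N := by
  have := hX M hMc hM
  obtain ⟨V, hV, hVc, hVN⟩ := locallyConnectedSpace_iff_connected_subsets.1 ‹_› ⟨b, hb⟩
    (Subtype.val ⁻¹' N) (continuousAt_subtype_val.preimage_mem_nhds hN)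
  refine ⟨Subtype.val '' V, ?_, hVc.image _ continuous_subtype_val.continuousOn, ?_⟩
  · rw [nhdsWithin_eq_map_subtype_coe hb]
    exact image_mem_map hV
  · rintro _ ⟨p, hp, rfl⟩
    exact ⟨p.2, hVN hp⟩

def rightClusterSet (π : X → Y) (γ : ℝ → Y) : Set X :=
  {p | ∀ δ > 0, p ∈ closure (π ⁻¹' (γ '' Ioo 0 δ))}

theorem closure_preimage_image_Ioo_mono {π : X → Y} {γ : ℝ → Y} {δ δ' : ℝ} (h : δ ≤ δ') :
    closure (π ⁻¹' (γ '' Ioo 0 δ)) ⊆ closure (π ⁻¹' (γ '' Ioo 0 δ')) :=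
  closure_mono (preimage_mono (image_mono (Ioo_subset_Ioo_right h)))

theorem nonempty_preimage_image_inter_Ioo_of_mem_rightClusterSet {π : X → Y} {γ : ℝ → Y}
    {p : X} (hp : p ∈ rightClusterSet π γ) {N : Set X} (hN : N ∈ 𝓝 p) {δ : ℝ} (hδ : 0 < δ) :
    (γ ⁻¹' (π '' N) ∩ Ioo 0 δ).Nonempty := by
  obtain ⟨x, hxN, τ, hτ, hxτ⟩ := mem_closure_iff_nhds.1 (hp δ hδ) N hN
  exact ⟨τ, ⟨x, hxN, hxτ.symm⟩, hτ⟩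

theorem preimage_singleton_subset_rightClusterSet_union [TopologicalSpace Y] {π : X → Y}
    (hc : Continuous π) {γ : ℝ → Y} (hγ : IsOpenMap γ) (hint : interior (π ⁻¹' {γ 0}) = ∅) :
    π ⁻¹' {γ 0} ⊆ rightClusterSet π γ ∪ rightClusterSet π (γ ∘ Neg.neg) := by
  set F := π ⁻¹' {γ 0}
  have hsides : ∀ δ > 0, F ⊆ closure (π ⁻¹' (γ '' Ioo 0 δ)) ∪
      closure (π ⁻¹' ((γ ∘ Neg.neg) '' Ioo 0 δ)) := by
    intro δ hδ p hp
    have hN : IsOpen (π ⁻¹' (γ '' Ioo (-δ) δ)) := (hγ _ isOpen_Ioo).preimage hc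
    have hpN : p ∈ π ⁻¹' (γ '' Ioo (-δ) δ) := ⟨0, ⟨by linarith, hδ⟩, hp.symm⟩
    rw [← closure_union, ← preimage_union]
    refine closure_mono ?_ ((interior_eq_empty_iff_dense_compl.1 hint).open_subset_closure_inter
      hN hpN)
    rintro q ⟨⟨τ, hτ, hqτ⟩, hqF⟩
    rcases lt_trichotomy τ 0 with hneg | rfl | hpos
    · exact Or.inr ⟨-τ, ⟨by linarith, by linarith [hτ.1]⟩, by simp [hqτ]⟩
    · exact absurd hqτ.symm hqF
    · exact Or.inl ⟨τ, ⟨hpos, hτ.2⟩, hqτ⟩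
  refine fun p hp => or_iff_not_imp_left.2 fun hright δ hδ => ?_
  obtain ⟨δ₁, hδ₁, hp₁⟩ : ∃ δ₁ > 0, p ∉ closure (π ⁻¹' (γ '' Ioo 0 δ₁)) := by
    simpa [rightClusterSet] using hright
  rcases hsides (min δ δ₁) (lt_min hδ hδ₁) hp with h | h
  · exact absurd (closure_preimage_image_Ioo_mono (min_le_right _ _) h) hp₁
  · exact closure_preimage_image_Ioo_mono (min_le_left _ _) h

end

theorem HereditarilyLocallyConnected.not_tendsto_of_interleaved_arcs {X Y : Type*}
    [TopologicalSpace X] [CompactSpace X] [TopologicalSpace Y] [T2Space Y]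
    (hX : HereditarilyLocallyConnected X) {π : X → Y} (hc : Continuous π)
    (hm : MonotoneFibers π) {γ : ℝ → Y} (hγ : Continuous γ) (hγi : InjOn γ (Icc 0 1))
    {s t : ℕ → ℝ} (hs : ∀ n, s n ∈ Ioc 0 1) (ht : ∀ n, t n ∈ Ioc 0 1)
    (hstep : ∀ n, max (s (n + 1)) (t (n + 1)) < min (s n) (t n))
    {U : Set X} (hU : IsPreconnected U) {x y : ℕ → X} (hxU : ∀ n, x n ∈ U)
    (hx : ∀ n, π (x n) = γ (s n)) (hy : ∀ n, π (y n) = γ (t n)) {b : X} (hb : b ∉ closure U) :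
    ¬ Tendsto y atTop (𝓝 b) := by
  intro hyb
  set Q : ℕ → Set X := fun m => π ⁻¹' (γ '' uIcc (s m) (t m))
  have hxQ : ∀ m, x m ∈ Q m := fun m => ⟨s m, left_mem_uIcc, (hx m).symm⟩
  have hyQ : ∀ m, y m ∈ Q m := fun m => ⟨t m, right_mem_uIcc, (hy m).symm⟩
  have hQ : ∀ m, IsPreconnected (Q m) := fun m =>
    (hm.isConnected_preimage hc (isCompact_uIcc.image hγ).isClosed
      ⟨nonempty_uIcc.image γ, isPreconnected_uIcc.image _ hγ.continuousOn⟩).isPreconnected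
  set M := closure (U ∪ ⋃ m, Q m)
  have hM : IsConnected M := by
    refine ⟨⟨x 0, subset_closure (Or.inl (hxU 0))⟩, IsPreconnected.closure ?_⟩
    rw [union_iUnion]
    exact isPreconnected_iUnion ⟨x 0, mem_iInter.2 fun m => Or.inl (hxU 0)⟩
      fun m => hU.union' ⟨x m, hxU m, hxQ m⟩ (hQ m)
  have hyM : ∀ m, y m ∈ M := fun m => subset_closure (Or.inr (mem_iUnion.2 ⟨m, hyQ m⟩))
  obtain ⟨V, hV, hVc, hVM⟩ := hX.exists_isPreconnected_mem_nhdsWithin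
    isClosed_closure.isCompact hM (isClosed_closure.mem_of_tendsto hyb (.of_forall hyM))
    (isClosed_closure.isOpen_compl.mem_nhds hb)
  obtain ⟨n, hn⟩ :=
    ((tendsto_nhdsWithin_iff.2 ⟨hyb, .of_forall hyM⟩).eventually hV).exists_forall_of_atTop
  set L := π ⁻¹' (γ '' Icc 0 (max (s (n + 1)) (t (n + 1))))
  set H := π ⁻¹' (γ '' Icc (min (s n) (t n)) 1)
  have hL : IsClosed L := (isCompact_Icc.image hγ).isClosed.preimage hc
  have hH : IsClosed H := (isCompact_Icc.image hγ).isClosed.preimage hc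
  have hVLH : V ⊆ L ∪ H := by
    intro p hp
    obtain ⟨hpM, hpU⟩ := hVM hp
    rw [closure_union] at hpM
    refine closure_minimal (iUnion_subset fun m => ?_) (hL.union hH) (hpM.resolve_left hpU)
    rw [← preimage_union, ← image_union]
    exact preimage_mono (image_mono (uIcc_subset_Icc_union_Icc_of_interleaved hs ht hstep m n))
  have hLH : Disjoint L H := by
    refine Disjoint.preimage _ (disjoint_left.2 ?_)
    rintro _ ⟨u, hu, rfl⟩ ⟨v, hv, hvu⟩
    have huv := hγi ⟨(le_min (hs n).1.le (ht n).1.le).trans hv.1, hv.2⟩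
      ⟨hu.1, hu.2.trans (max_le (hs _).2 (ht _).2)⟩ hvu
    exact (hstep n).not_ge (huv ▸ hu.2 |>.trans' hv.1)
  obtain ⟨p, -, hpL, hpH⟩ := isPreconnected_closed_iff.1 hVc L H hL hH hVLH
    ⟨y (n + 1), hn _ n.le_succ, t (n + 1), ⟨(ht _).1.le, le_max_right _ _⟩, (hy _).symm⟩
    ⟨y n, hn n le_rfl, t n, ⟨min_le_right _ _, (ht n).2⟩, (hy n).symm⟩
  exact disjoint_left.1 hLH hpL hpH

theorem HereditarilyLocallyConnected.rightClusterSet_subsingleton {X Y : Type*} [MetricSpace X]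
    [CompactSpace X] [ConnectedSpace X] [TopologicalSpace Y] [T2Space Y]
    (hX : HereditarilyLocallyConnected X) {π : X → Y} (hc : Continuous π)
    (hm : MonotoneFibers π) {γ : ℝ → Y} (hγ : Continuous γ) (hγi : InjOn γ (Icc 0 1)) :
    (rightClusterSet π γ).Subsingleton := by
  intro a ha b hb
  by_contra hab
  have hr : 0 < dist a b / 2 := half_pos (dist_pos.2 hab)
  obtain ⟨U, hU, hUc, hUr⟩ := hX.exists_isPreconnected_mem_nhdsWithin isCompact_univ
    isConnected_univ (mem_univ a) (ball_mem_nhds a hr)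
  rw [nhdsWithin_univ] at hU
  obtain ⟨s, t, hst⟩ := exists_seq_interleaved (S := fun _ => γ ⁻¹' (π '' U))
    (T := fun n => γ ⁻¹' (π '' ball b (1 / (n + 1))))
    (fun _ _ => nonempty_preimage_image_inter_Ioo_of_mem_rightClusterSet ha hU)
    (fun n _ => nonempty_preimage_image_inter_Ioo_of_mem_rightClusterSet hb
      (ball_mem_nhds b (by positivity)))
  choose x hxU hx using fun n => (hst n).1.1
  choose y hyball hy using fun n => (hst n).2.1.1
  have hbU : b ∉ closure U := by
    intro hbU
    have hba := closure_ball_subset_closedBall (closure_mono (hUr.trans inter_subset_right) hbU)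
    rw [mem_closedBall, dist_comm] at hba
    linarith
  have hyb : Tendsto y atTop (𝓝 b) := tendsto_iff_dist_tendsto_zero.2 (squeeze_zero
    (fun _ => dist_nonneg) (fun n => (hyball n).le) tendsto_one_div_add_atTop_nhds_zero_nat)
  exact hX.not_tendsto_of_interleaved_arcs hc hm hγ hγi (fun n => (hst n).1.2)
    (fun n => (hst n).2.1.2) (fun n => (hst n).2.2) hUc hxU hx hy hbU hyb

theorem Circle.injOn_mul_exp (s : Circle) : InjOn (fun t => s * Circle.exp t) (Icc (-1) 1) :=
  (mul_right_injective s).comp_injOn (Circle.exp_injOn_Icc (by linarith [Real.pi_gt_three]))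

theorem Circle.isOpenMap_mul_exp (s : Circle) : IsOpenMap (fun t => s * Circle.exp t) :=
  (Homeomorph.mulLeft s).isOpenMap.comp isLocalHomeomorph_circleExp.isOpenMap

theorem stmt7_general {X : Type*} [MetricSpace X] [CompactSpace X] [ConnectedSpace X]
    (hHLC : HereditarilyLocallyConnected X)
    (π : X → Circle) (hc : Continuous π)
    (hm : MonotoneFibers π)
    (hint : ∀ s : Circle, interior (π ⁻¹' {s}) = ∅) :
    ∃ h : X ≃ₜ Circle, ⇑h = π := by
  have hinj : Function.Injective π := by
    intro x y hxy
    let γ : ℝ → Circle := fun t => π y * Circle.exp t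
    have hγ0 : γ 0 = π y := by simp [γ]
    have hγ : Continuous γ := by fun_prop
    have hγi : InjOn γ (Icc (-1) 1) := Circle.injOn_mul_exp (π y)
    have hfiber := preimage_singleton_subset_rightClusterSet_union (γ := γ) hc
      (Circle.isOpenMap_mul_exp (π y)) (by rw [hγ0]; exact hint _)
    rw [hγ0] at hfiber
    have hright := hHLC.rightClusterSet_subsingleton hc hm hγ
      (hγi.mono (Icc_subset_Icc_left (by norm_num)))
    have hleft := hHLC.rightClusterSet_subsingleton hc hm (hγ.comp continuous_neg)
      (hγi.comp neg_injective.injOn fun t ht => ⟨neg_le_neg ht.2, by linarith [ht.1]⟩)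
    have hfin := (hright.finite.union hleft.finite).subset hfiber
    exact not_nontrivial_iff.1 (fun h => (hm (π y)).isPreconnected.infinite_of_nontrivial h hfin)
      hxy rfl
  exact ⟨Continuous.homeoOfEquivCompactToT2
    (f := Equiv.ofBijective π ⟨hinj, fun z => (hm z).nonempty⟩) hc, rfl⟩

/-- a monotone continuous surjection with nowhere dense fibers from a
hereditarily locally connected continuum onto the circle is a homeomorphism. -/
theorem stmt7 {X : Type*} [MetricSpace X] [CompactSpace X] [ConnectedSpace X]
    (hHLC : HereditarilyLocallyConnected X)
    (π : X → Circle) (hc : Continuous π) (hs : Function.Surjective π)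
    (hm : MonotoneFibers π)
    (hint : ∀ s : Circle, interior (π ⁻¹' {s}) = ∅) :
    ∃ h : X ≃ₜ Circle, ⇑h = π :=
  stmt7_general hHLC π hc hm hint
end

section
/- Let f : X → X be a minimal map on a compact metric space without periodic points, and let C be a subcontinuum of X such that the diameters of f^n(C) tend to 0. Then the sets f^n(C), n ≥ 0, are pairwise disjoint. -/
open Metric Filter Topology Set

/-- for a minimal map without periodic points, a subcontinuum whose
iterates shrink to zero diameter has pairwise disjoint iterates. -/
theorem stmt10 {X : Type*} [MetricSpace X] [CompactSpace X]
    (f : X → X) (hmin : MinimalMap f)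
    (hper : ∀ (x : X) (n : ℕ), 0 < n → f^[n] x ≠ x)
    (C : Set X) (hCne : C.Nonempty) (hC : IsCompact C) (hCc : IsConnected C)
    (hdiam : Tendsto (fun n => diam (f^[n] '' C)) atTop (𝓝 0)) :
    Pairwise fun m n : ℕ => Disjoint (f^[m] '' C) (f^[n] '' C) := by
  have hcf : Continuous f := hmin.1
  intro m n hmn
  wlog hlt : m < n generalizing m n
  · exact (this hmn.symm (hmn.lt_or_gt.resolve_left hlt)).symm
  by_contra hdis
  rw [Set.not_disjoint_iff] at hdis
  obtain ⟨p, hpm, hpn⟩ := hdis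
  set k := n - m with hk
  have hk0 : 0 < k := Nat.sub_pos_of_lt hlt
  have hnk : m + k = n := Nat.add_sub_cancel' hlt.le
  set x : ℕ → X := fun j => f^[j * k] p with hx
  have key : ∀ j, f^[k] (x j) = x (j + 1) := by
    intro j
    simp only [hx, ← Function.iterate_add_apply]
    congr 1
    ring
  have hmem : ∀ j, x j ∈ f^[n + j * k] '' C ∧ x (j + 1) ∈ f^[n + j * k] '' C := by
    intro j
    obtain ⟨c, hc, hcp⟩ := hpn
    obtain ⟨c', hc', hcp'⟩ := hpm
    constructor
    · refine ⟨c, hc, ?_⟩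
      rw [show n + j * k = j * k + n by ring, Function.iterate_add_apply, hcp]
    · refine ⟨c', hc', ?_⟩
      have hjk : (j + 1) * k = j * k + k := by ring
      rw [show n + j * k = (j + 1) * k + m by omega, Function.iterate_add_apply, hcp']
  have hbd : ∀ j, dist (x j) (x (j + 1)) ≤ diam (f^[n + j * k] '' C) := by
    intro j
    exact dist_le_diam_of_mem ((hC.image (hcf.iterate _)).isBounded)
      (hmem j).1 (hmem j).2
  have htend : Tendsto (fun j : ℕ => n + j * k) atTop atTop :=
    tendsto_atTop_mono
      (fun j => le_trans (Nat.le_mul_of_pos_right j hk0) (Nat.le_add_left _ _)) tendsto_id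
  have hdist0 : Tendsto (fun j => dist (x j) (x (j + 1))) atTop (𝓝 0) :=
    squeeze_zero (fun j => dist_nonneg) hbd (hdiam.comp htend)
  obtain ⟨q, -, φ, hφ, hconv⟩ := isCompact_univ.tendsto_subseq (fun j => Set.mem_univ (x j))
  have hdist0' : Tendsto (fun i => dist (x (φ i)) (x (φ i + 1))) atTop (𝓝 0) :=
    hdist0.comp hφ.tendsto_atTop
  have h2 : Tendsto (fun i => x (φ i + 1)) atTop (𝓝 q) :=
    hconv.congr_dist hdist0'
  have h3 : Tendsto (fun i => x (φ i + 1)) atTop (𝓝 (f^[k] q)) := by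
    have := ((hcf.iterate k).tendsto q).comp hconv
    simpa [Function.comp_def, key] using this
  exact hper q k hk0 (tendsto_nhds_unique h3 h2)
end

section
/- Let f : X → X be a minimal map on a finitely Suslinean continuum X not reduced to a point. Define x 𝓡 y iff there is a subcontinuum C containing x and y with diam(f^n(C)) → 0. Then 𝓡 is a closed, f-invariant equivalence relation whose classes are subcontinua (in particular the quotient map is monotone). -/
open Metric Filter Topology Set

/-!
Call a continuum shrinking if the diameters of its forward images tend to `0`; `x 𝓡 y` says
that some shrinking continuum contains `x` and `y`. Shrinking continua through a common point
have a shrinking union, so `𝓡` is transitive and each class `π z` is connected.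

No class contains two distinct points `f^[m] z`, `f^[m + p] z` of an orbit: `f^[p]` would then
move the points of the orbit by amounts tending to `0`, hence have a fixed point, and by
minimality `X` would be a single finite orbit, which a nondegenerate continuum is not.
So if the images `f^[n] '' π z` did not shrink, infinitely many of them would contain shrinking
continua of diameter bounded below lying in the pairwise distinct classes `π (f^[n] z)`;
these continua are pairwise disjoint, against finite Suslinity. Thus `closure (π z)` is a
shrinking continuum through `z`, and `π z` is closed.

If `x_k 𝓡 y_k` with `(x_k, y_k) → (x, y)` and `x ≠ y`, the classes `π x_k` are continua of
diameter bounded below which are equal or disjoint, so finite Suslinity leaves only finitely many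
of them; one contains infinitely many of the pairs, and being closed it contains `x` and `y`.
-/

theorem exists_lt_dist_of_lt_diam {X : Type*} [MetricSpace X] {s : Set X} {r : ℝ} (hr : 0 ≤ r)
    (h : r < diam s) :
    ∃ x ∈ s, ∃ y ∈ s, r < dist x y := by
  by_contra! hs
  exact (diam_le_of_forall_dist_le hr hs).not_gt h

theorem FinitelySuslinean.finite_of_le_diam {X : Type*} [MetricSpace X]
    (hFS : FinitelySuslinean X) {ι : Type} {A : ι → Set X}
    (hA : ∀ i, IsCompact (A i) ∧ IsConnected (A i))
    (hdisj : Pairwise (Function.onFun Disjoint A)) {ε : ℝ} (hε : 0 < ε)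
    (hdiam : ∀ i, ε ≤ diam (A i)) : Finite ι := by
  have hfin := hFS ι A (fun i => ⟨(hA i).2.nonempty, hA i⟩) hdisj ε hε
  rwa [show {i | ε ≤ diam (A i)} = univ from eq_univ_of_forall hdiam, finite_univ_iff] at hfin

theorem MinimalMap.finite_of_isPeriodicPt {X : Type*} [TopologicalSpace X] [T1Space X]
    {f : X → X} (hmin : MinimalMap f) {p : ℕ} {v : X} (hp : 0 < p)
    (hv : Function.IsPeriodicPt f p v) : Finite X := by
  have horbit : (range fun n => f^[n] v).Finite :=
    ((finite_Iio p).image fun n => f^[n] v).subset <| range_subset_iff.2 fun n =>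
      ⟨n % p, Nat.mod_lt n hp, hv.iterate_mod_apply n⟩
  have hmaps : MapsTo f (range fun n => f^[n] v) (range fun n => f^[n] v) := by
    rintro _ ⟨n, rfl⟩
    exact ⟨n + 1, Function.iterate_succ_apply' f n v⟩
  rw [← finite_univ_iff, ← hmin.2 _ horbit.isClosed (range_nonempty _) hmaps]
  exact horbit

theorem exists_isFixedPt_of_tendsto_dist {X : Type*} [MetricSpace X] [CompactSpace X] {g : X → X}
    (hg : Continuous g) (u : ℕ → X)
    (hu : Tendsto (fun n => dist (g (u n)) (u n)) atTop (𝓝 0)) :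
    ∃ v, Function.IsFixedPt g v := by
  obtain ⟨v, φ, hφ, hlim⟩ := CompactSpace.tendsto_subseq u
  have hdist : Tendsto (fun n => dist (g (u (φ n))) (u (φ n))) atTop (𝓝 (dist (g v) v)) :=
    ((hg.tendsto v).comp hlim).dist hlim
  exact ⟨v, dist_eq_zero.1 (tendsto_nhds_unique hdist (hu.comp hφ.tendsto_atTop))⟩

section Shrinking

variable {X : Type*} [MetricSpace X] (f : X → X)

def IsShrinking (C : Set X) : Prop :=
  Tendsto (fun n => diam (f^[n] '' C)) atTop (𝓝 0)

def ShrinkRel (x y : X) : Prop :=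
  ∃ C : Set X, IsCompact C ∧ IsConnected C ∧ x ∈ C ∧ y ∈ C ∧ IsShrinking f C

def shrinkClass (z : X) : Set X := {y | ShrinkRel f z y}

variable {f}

theorem isShrinking_singleton (x : X) : IsShrinking f {x} := by
  simp only [IsShrinking, image_singleton, diam_singleton, tendsto_const_nhds]

theorem IsShrinking.union {s t : Set X} (hs : IsShrinking f s) (ht : IsShrinking f t)
    (hst : (s ∩ t).Nonempty) : IsShrinking f (s ∪ t) := by
  have hle (n : ℕ) : diam (f^[n] '' (s ∪ t)) ≤ diam (f^[n] '' s) + diam (f^[n] '' t) := by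
    rw [image_union]
    exact diam_union' ((hst.image _).mono (image_inter_subset _ _ _))
  exact squeeze_zero (fun n => diam_nonneg) hle (by simpa using hs.add ht)

theorem IsShrinking.image_iterate {s : Set X} (hs : IsShrinking f s) (m : ℕ) :
    IsShrinking f (f^[m] '' s) := by
  unfold IsShrinking
  simp only [← image_comp, ← Function.iterate_add]
  exact hs.comp (tendsto_add_atTop_nat m)

theorem shrinkRel_refl (x : X) : ShrinkRel f x x :=
  ⟨{x}, isCompact_singleton, isConnected_singleton, rfl, rfl, isShrinking_singleton x⟩

theorem ShrinkRel.symm {x y : X} (h : ShrinkRel f x y) : ShrinkRel f y x :=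
  let ⟨C, hCc, hCconn, hx, hy, hC⟩ := h
  ⟨C, hCc, hCconn, hy, hx, hC⟩

theorem ShrinkRel.trans {x y z : X} (hxy : ShrinkRel f x y) (hyz : ShrinkRel f y z) :
    ShrinkRel f x z := by
  obtain ⟨C, hCc, hCconn, hx, hy, hC⟩ := hxy
  obtain ⟨D, hDc, hDconn, hy', hz, hD⟩ := hyz
  exact ⟨C ∪ D, hCc.union hDc, hCconn.union ⟨y, hy, hy'⟩ hDconn, Or.inl hx, Or.inr hz,
    hC.union hD ⟨y, hy, hy'⟩⟩

theorem shrinkRel_equivalence (f : X → X) : Equivalence (ShrinkRel f) :=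
  ⟨shrinkRel_refl, ShrinkRel.symm, ShrinkRel.trans⟩

theorem ShrinkRel.iterate (hf : Continuous f) {x y : X} (h : ShrinkRel f x y) (m : ℕ) :
    ShrinkRel f (f^[m] x) (f^[m] y) := by
  obtain ⟨C, hCc, hCconn, hx, hy, hC⟩ := h
  exact ⟨f^[m] '' C, hCc.image (hf.iterate m), hCconn.image _ (hf.iterate m).continuousOn,
    mem_image_of_mem _ hx, mem_image_of_mem _ hy, hC.image_iterate m⟩

theorem shrinkClass_eq_of_not_disjoint {x y : X}
    (h : ¬Disjoint (shrinkClass f x) (shrinkClass f y)) : shrinkClass f x = shrinkClass f y := by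
  obtain ⟨t, hxt, hyt⟩ := not_disjoint_iff.1 h
  have hxy : ShrinkRel f x y := hxt.trans hyt.symm
  ext w
  exact ⟨hxy.symm.trans, hxy.trans⟩

theorem isConnected_shrinkClass (z : X) : IsConnected (shrinkClass f z) := by
  refine ⟨⟨z, shrinkRel_refl z⟩, isPreconnected_of_forall z fun y hy => ?_⟩
  obtain ⟨C, hCc, hCconn, hz, hyC, hC⟩ := hy
  exact ⟨C, fun c hc => ⟨C, hCc, hCconn, hz, hc, hC⟩, hz, hyC, hCconn.isPreconnected⟩

end Shrinking

section Compact

variable {X : Type*} [MetricSpace X] [CompactSpace X]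

theorem IsShrinking.closure {f : X → X} (hf : Continuous f) {s : Set X} (hs : IsShrinking f s) :
    IsShrinking f (closure s) :=
  squeeze_zero (fun _ => diam_nonneg) (fun n => (diam_mono
    (image_closure_subset_closure_image (hf.iterate n)) isBounded_of_compactSpace).trans_eq
      (diam_closure _)) hs

variable [ConnectedSpace X] {f : X → X}

theorem not_shrinkRel_iterate_self (hnt : (univ : Set X).Nontrivial) (hmin : MinimalMap f)
    {p : ℕ} (hp : 0 < p) (w : X) : ¬ShrinkRel f w (f^[p] w) := by
  rintro ⟨C, -, -, hw, hpw, hC⟩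
  have hclose : ∀ n, dist (f^[p] (f^[n] w)) (f^[n] w) ≤ diam (f^[n] '' C) := fun n => by
    rw [← Function.iterate_add_apply, Nat.add_comm, Function.iterate_add_apply]
    exact dist_le_diam_of_mem isBounded_of_compactSpace (mem_image_of_mem _ hpw)
      (mem_image_of_mem _ hw)
  obtain ⟨v, hv⟩ := exists_isFixedPt_of_tendsto_dist (hmin.1.iterate p) (fun n => f^[n] w)
    (squeeze_zero (fun _ => dist_nonneg) hclose hC)
  have := hmin.finite_of_isPeriodicPt hp hv
  obtain ⟨a, -, b, -, hab⟩ := hnt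
  exact hab (PreconnectedSpace.constant inferInstance continuous_id)

theorem eq_of_shrinkRel_iterate (hnt : (univ : Set X).Nontrivial) (hmin : MinimalMap f)
    {z : X} {m n : ℕ} (h : ShrinkRel f (f^[m] z) (f^[n] z)) : m = n := by
  wlog hmn : m ≤ n generalizing m n
  · exact (this h.symm (le_of_not_ge hmn)).symm
  obtain ⟨k, rfl⟩ := Nat.exists_eq_add_of_le hmn
  rcases Nat.eq_zero_or_pos k with rfl | hk
  · rfl
  · rw [add_comm, Function.iterate_add_apply] at h
    exact absurd h (not_shrinkRel_iterate_self hnt hmin hk _)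

theorem isShrinking_shrinkClass (hFS : FinitelySuslinean X) (hnt : (univ : Set X).Nontrivial)
    (hmin : MinimalMap f) (z : X) : IsShrinking f (shrinkClass f z) := by
  by_contra hns
  obtain ⟨ε, hε, hS⟩ : ∃ ε > 0, {n | ε ≤ diam (f^[n] '' shrinkClass f z)}.Infinite := by
    rw [IsShrinking, Metric.tendsto_atTop] at hns
    push Not at hns
    obtain ⟨ε, hε, h⟩ := hns
    refine ⟨ε, hε, Nat.frequently_atTop_iff_infinite.1 (frequently_atTop.2 fun N => ?_)⟩
    obtain ⟨n, hn, hd⟩ := h N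
    exact ⟨n, hn, by rwa [Real.dist_eq, sub_zero, abs_of_nonneg diam_nonneg] at hd⟩
  have hwide : ∀ n : {n | ε ≤ diam (f^[n] '' shrinkClass f z)}, ∃ u, ∃ G : Set X,
      IsCompact G ∧ IsConnected G ∧ IsShrinking f G ∧ ShrinkRel f (f^[n] z) u ∧ u ∈ G ∧
        ε / 2 ≤ diam G := by
    rintro ⟨n, hn⟩
    obtain ⟨_, ⟨u, hu, rfl⟩, _, ⟨v, hv, rfl⟩, huv⟩ :=
      exists_lt_dist_of_lt_diam (half_pos hε).le ((half_lt_self hε).trans_le hn)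
    obtain ⟨G, hGc, hGconn, hu', hv', hG⟩ := (hu.symm.trans hv).iterate hmin.1 n
    exact ⟨_, G, hGc, hGconn, hG, hu.iterate hmin.1 n, hu',
      huv.le.trans (dist_le_diam_of_mem isBounded_of_compactSpace hu' hv')⟩
  choose u G hGc hGconn hG hzu huG hGdiam using hwide
  have hdisj : Pairwise (Function.onFun Disjoint G) := by
    intro n m hnm
    refine disjoint_left.2 fun t htn htm =>
      hnm (Subtype.ext (eq_of_shrinkRel_iterate hnt hmin (z := z) ?_))
    exact ((hzu n).trans ⟨G n, hGc n, hGconn n, huG n, htn, hG n⟩).trans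
      ((hzu m).trans ⟨G m, hGc m, hGconn m, huG m, htm, hG m⟩).symm
  have := hFS.finite_of_le_diam (fun n => ⟨hGc n, hGconn n⟩) hdisj (half_pos hε) hGdiam
  have := hS.to_subtype
  exact not_finite {n | ε ≤ diam (f^[n] '' shrinkClass f z)}

theorem isClosed_shrinkClass (hFS : FinitelySuslinean X) (hnt : (univ : Set X).Nontrivial)
    (hmin : MinimalMap f) (z : X) : IsClosed (shrinkClass f z) :=
  isClosed_of_closure_subset fun _ hy => ⟨_, isClosed_closure.isCompact,
    (isConnected_shrinkClass z).closure, subset_closure (shrinkRel_refl z), hy,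
    (isShrinking_shrinkClass hFS hnt hmin z).closure hmin.1⟩

theorem shrinkRel_of_tendsto (hFS : FinitelySuslinean X) (hnt : (univ : Set X).Nontrivial)
    (hmin : MinimalMap f) {a b : ℕ → X} {x y : X} {ε : ℝ} (hε : 0 < ε)
    (hab : ∀ k, ShrinkRel f (a k) (b k)) (hdist : ∀ k, ε ≤ dist (a k) (b k))
    (ha : Tendsto a atTop (𝓝 x)) (hb : Tendsto b atTop (𝓝 y)) : ShrinkRel f x y := by
  set cls : ℕ → Set X := fun k => shrinkClass f (a k)
  have : Finite (Quotient (Setoid.ker cls)) := by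
    refine hFS.finite_of_le_diam (A := fun q => cls q.out)
      (fun q => ⟨(isClosed_shrinkClass hFS hnt hmin _).isCompact, isConnected_shrinkClass _⟩)
      (fun q q' hqq' => ?_) hε fun q => (hdist _).trans
        (dist_le_diam_of_mem isBounded_of_compactSpace (shrinkRel_refl _) (hab _))
    by_contra hq
    exact hqq' (Quotient.out_equiv_out.1 (shrinkClass_eq_of_not_disjoint hq))
  obtain ⟨q, hq⟩ := Finite.exists_infinite_fiber (Quotient.mk (Setoid.ker cls))
  have hfreq : ∃ᶠ k in atTop, a k ∈ cls q.out ∧ b k ∈ cls q.out := by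
    refine (Nat.frequently_atTop_iff_infinite.2 (infinite_coe_iff.1 hq)).mono fun k hk => ?_
    have hk : cls q.out = cls k := hk ▸ Setoid.ker_apply_mk_out k
    exact hk ▸ ⟨shrinkRel_refl _, hab k⟩
  have hclosed := isClosed_shrinkClass hFS hnt hmin (a q.out)
  exact (hclosed.mem_of_frequently_of_tendsto (hfreq.mono fun _ => And.left) ha).symm.trans
    (hclosed.mem_of_frequently_of_tendsto (hfreq.mono fun _ => And.right) hb)

theorem isClosed_setOf_shrinkRel (hFS : FinitelySuslinean X) (hnt : (univ : Set X).Nontrivial)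
    (hmin : MinimalMap f) : IsClosed {p : X × X | ShrinkRel f p.1 p.2} := by
  refine isClosed_of_closure_subset fun ⟨x, y⟩ hxy => ?_
  obtain ⟨q, hq, hlim⟩ := mem_closure_iff_seq_limit.1 hxy
  rcases eq_or_ne x y with rfl | hne
  · exact shrinkRel_refl x
  have hx : Tendsto (fun k => (q k).1) atTop (𝓝 x) := (continuous_fst.tendsto _).comp hlim
  have hy : Tendsto (fun k => (q k).2) atTop (𝓝 y) := (continuous_snd.tendsto _).comp hlim
  obtain ⟨N, hN⟩ := eventually_atTop.1 <|
    (hx.dist hy).eventually_const_lt (half_lt_self (dist_pos.2 hne))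
  exact shrinkRel_of_tendsto hFS hnt hmin (half_pos (dist_pos.2 hne)) (fun k => hq (k + N))
    (fun k => (hN _ (Nat.le_add_left N k)).le) (hx.comp (tendsto_add_atTop_nat N))
    (hy.comp (tendsto_add_atTop_nat N))

end Compact

/-- the shrinking-continuum relation is a closed invariant monotone
equivalence relation. -/
theorem stmt11 {X : Type*} [MetricSpace X] [CompactSpace X] [ConnectedSpace X]
    (hFS : FinitelySuslinean X) (hnt : (univ : Set X).Nontrivial)
    (f : X → X) (hmin : MinimalMap f)
    (R : X → X → Prop)
    (hR : ∀ x y, R x y ↔ ∃ C : Set X, IsCompact C ∧ IsConnected C ∧ x ∈ C ∧ y ∈ C ∧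
        Tendsto (fun n => diam (f^[n] '' C)) atTop (𝓝 0)) :
    Equivalence R ∧ IsClosed {p : X × X | R p.1 p.2} ∧
      (∀ x y, R x y → R (f x) (f y)) ∧
      ∀ x : X, IsCompact {y | R x y} ∧ IsConnected {y | R x y} := by
  obtain rfl : R = ShrinkRel f := funext₂ fun x y => propext (hR x y)
  exact ⟨shrinkRel_equivalence f, isClosed_setOf_shrinkRel hFS hnt hmin,
    fun x y h => h.iterate hmin.1 1, fun x =>
      ⟨(isClosed_shrinkClass hFS hnt hmin x).isCompact, isConnected_shrinkClass x⟩⟩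
end

section
/- Let f : X → X be a minimal map on a compact metric space X. Then the regional proximality relation RP⁺(X,f) equals X × X if and only if (X,f) is weakly mixing. -/
open Metric Filter Topology Set

section Aux12
variable {X : Type*} [MetricSpace X] [CompactSpace X]

lemma prodIter12 (f : X → X) (n : ℕ) (p : X × X) :
    (fun q : X × X => (f q.1, f q.2))^[n] p = (f^[n] p.1, f^[n] p.2) := by
  induction n generalizing p with
  | zero => simp
  | succ n ih =>
    rw [Function.iterate_succ_apply, Function.iterate_succ_apply,
      Function.iterate_succ_apply]
    exact ih _

lemma denseOrbit12 {f : X → X} (hmin : MinimalMap f) (x : X) {V : Set X}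
    (hV : IsOpen V) (hVne : V.Nonempty) : ∃ n, f^[n] x ∈ V := by
  obtain ⟨hc, hm⟩ := hmin
  set S : Set X := range (fun n => f^[n] x) with hS
  have hmem : x ∈ S := ⟨0, rfl⟩
  have hMaps : MapsTo f S S := by
    rintro _ ⟨n, rfl⟩
    exact ⟨n + 1, by simp [Function.iterate_succ_apply']⟩
  have hclosed := hm (closure S) isClosed_closure ⟨x, subset_closure hmem⟩
    (hMaps.closure hc)
  obtain ⟨v, hv⟩ := hVne
  have hvS : v ∈ closure S := hclosed ▸ mem_univ v
  obtain ⟨y, hyV, hyS⟩ := mem_closure_iff.mp hvS V hV hv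
  obtain ⟨n, rfl⟩ := hyS
  exact ⟨n, hyV⟩

lemma coverK12 {f : X → X} (hmin : MinimalMap f) {V : Set X} (hV : IsOpen V)
    (hVne : V.Nonempty) : ∃ K, ∀ x : X, ∃ k ≤ K, f^[k] x ∈ V := by
  have hcov : (univ : Set X) ⊆ ⋃ k : ℕ, f^[k] ⁻¹' V := by
    intro x _
    obtain ⟨n, hn⟩ := denseOrbit12 hmin x hV hVne
    exact mem_iUnion.mpr ⟨n, hn⟩
  obtain ⟨t, ht⟩ := isCompact_univ.elim_finite_subcover (fun k : ℕ => f^[k] ⁻¹' V)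
    (fun k => hV.preimage (hmin.1.iterate k)) hcov
  refine ⟨t.sup id, fun x => ?_⟩
  obtain ⟨k, hk, hkx⟩ := mem_iUnion₂.mp (ht (mem_univ x))
  exact ⟨k, Finset.le_sup (f := id) hk, hkx⟩

lemma unifIter12 {f : X → X} (hc : Continuous f) (K : ℕ) {r : ℝ} (hr : 0 < r) :
    ∃ δ > 0, ∀ a b : X, dist a b < δ → ∀ k ≤ K, dist (f^[k] a) (f^[k] b) < r := by
  induction K with
  | zero =>
    refine ⟨r, hr, fun a b h k hk => ?_⟩
    obtain rfl := Nat.le_zero.mp hk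
    simpa using h
  | succ K ih =>
    obtain ⟨δ₀, hδ₀, h₀⟩ := ih
    have hu : UniformContinuous f^[K + 1] :=
      CompactSpace.uniformContinuous_of_continuous (hc.iterate (K + 1))
    obtain ⟨δ₁, hδ₁, h₁⟩ := Metric.uniformContinuous_iff.mp hu r hr
    refine ⟨min δ₀ δ₁, lt_min hδ₀ hδ₁, fun a b h k hk => ?_⟩
    rcases eq_or_lt_of_le hk with rfl | hlt
    · exact h₁ (lt_of_lt_of_le h (min_le_right _ _))
    · exact h₀ a b (lt_of_lt_of_le h (min_le_left _ _)) k (Nat.lt_succ_iff.mp hlt)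

lemma key12 {f : X → X} (hmin : MinimalMap f) (hRP : ∀ x y : X, RPplus f x y)
    {A B V : Set X} (hA : IsOpen A) (hB : IsOpen B) (hV : IsOpen V)
    (hAne : A.Nonempty) (hBne : B.Nonempty) (hVne : V.Nonempty) :
    ∃ n, ∃ a ∈ A, ∃ b ∈ B, f^[n] a ∈ V ∧ f^[n] b ∈ V := by
  obtain ⟨v₀, hv₀⟩ := hVne
  obtain ⟨r, hr, hball⟩ := Metric.isOpen_iff.mp hV v₀ hv₀
  have hr2 : (0 : ℝ) < r / 2 := by linarith
  obtain ⟨K, hK⟩ := coverK12 hmin (isOpen_ball (x := v₀) (ε := r / 2))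
    ⟨v₀, mem_ball_self hr2⟩
  obtain ⟨δ, hδ, hδp⟩ := unifIter12 hmin.1 K hr2
  obtain ⟨a₀, ha₀⟩ := hAne
  obtain ⟨b₀, hb₀⟩ := hBne
  obtain ⟨a, haA, b, hbB, n, hn⟩ := hRP a₀ b₀ δ hδ A B hA hB ha₀ hb₀
  obtain ⟨k, hkK, hk⟩ := hK (f^[n] a)
  have hmemA : f^[k + n] a ∈ ball v₀ (r / 2) := by
    rw [Function.iterate_add_apply]; exact hk
  have hclose : dist (f^[k + n] a) (f^[k + n] b) < r / 2 := by
    rw [Function.iterate_add_apply, Function.iterate_add_apply]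
    exact hδp _ _ hn k hkK
  refine ⟨k + n, a, haA, b, hbB, hball (ball_subset_ball (by linarith) hmemA), ?_⟩
  apply hball
  have hda : dist (f^[k + n] a) v₀ < r / 2 := mem_ball.mp hmemA
  have : dist (f^[k + n] b) v₀ < r := by
    calc dist (f^[k + n] b) v₀ ≤ dist (f^[k + n] b) (f^[k + n] a) + dist (f^[k + n] a) v₀ :=
          dist_triangle _ _ _
      _ < r := by rw [dist_comm] at hclose; linarith
  exact mem_ball.mpr this

end Aux12

/-- for a minimal map, RP⁺ = X × X iff weakly mixing. -/
theorem stmt12 {X : Type*} [MetricSpace X] [CompactSpace X]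
    (f : X → X) (hmin : MinimalMap f) :
    (∀ x y : X, RPplus f x y) ↔ WeaklyMixing f := by
  have hc : Continuous f := hmin.1
  constructor
  · intro hRP U V hU hV hUne hVne
    obtain ⟨⟨u₁, u₂⟩, hu⟩ := hUne
    obtain ⟨⟨v₁, v₂⟩, hv⟩ := hVne
    obtain ⟨U₁, U₂, hU₁, hU₂, hu₁, hu₂, hUsub⟩ := isOpen_prod_iff.mp hU u₁ u₂ hu
    obtain ⟨V₁, V₂, hV₁, hV₂, hv₁, hv₂, hVsub⟩ := isOpen_prod_iff.mp hV v₁ v₂ hv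
    obtain ⟨t, ht⟩ := denseOrbit12 hmin v₁ hV₂ ⟨v₂, hv₂⟩
    have hWo : IsOpen (V₁ ∩ f^[t] ⁻¹' V₂) := hV₁.inter (hV₂.preimage (hc.iterate t))
    have hWne : (V₁ ∩ f^[t] ⁻¹' V₂).Nonempty := ⟨v₁, hv₁, ht⟩
    have : Nonempty X := ⟨u₁⟩
    have hsurj : Function.Surjective f := by
      have h := hmin.2 (Set.range f) (isCompact_range hc).isClosed (range_nonempty f)
        (fun x _ => mem_range_self x)
      intro y
      have hy : y ∈ Set.range f := by rw [h]; exact mem_univ y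
      exact hy
    have hBo : IsOpen (f^[t] ⁻¹' U₂) := hU₂.preimage (hc.iterate t)
    have hBne : (f^[t] ⁻¹' U₂).Nonempty := by
      obtain ⟨b, hb⟩ := (hsurj.iterate t) u₂
      exact ⟨b, by rw [Set.mem_preimage, hb]; exact hu₂⟩
    obtain ⟨n, a, haU₁, b, hbB, haW, hbW⟩ :=
      key12 hmin hRP hU₁ hBo hWo ⟨u₁, hu₁⟩ hBne hWne
    refine ⟨n, (fun p : X × X => (f p.1, f p.2))^[n] (a, f^[t] b),
      ⟨(a, f^[t] b), hUsub ⟨haU₁, hbB⟩, rfl⟩, ?_⟩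
    rw [prodIter12]
    apply hVsub
    refine ⟨haW.1, ?_⟩
    have hcomm : f^[n] (f^[t] b) = f^[t] (f^[n] b) := by
      rw [← Function.iterate_add_apply, ← Function.iterate_add_apply, Nat.add_comm]
    rw [hcomm]
    exact hbW.2
  · intro hwm x y ε hε Ox Oy hOx hOy hx hy
    have hε2 : (0 : ℝ) < ε / 2 := by linarith
    obtain ⟨n, q, ⟨p, hpU, rfl⟩, hqV⟩ := hwm (Ox ×ˢ Oy)
      (ball x (ε / 2) ×ˢ ball x (ε / 2)) (hOx.prod hOy)
      (isOpen_ball.prod isOpen_ball) ⟨(x, y), hx, hy⟩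
      ⟨(x, x), mem_ball_self hε2, mem_ball_self hε2⟩
    refine ⟨p.1, hpU.1, p.2, hpU.2, n, ?_⟩
    rw [prodIter12] at hqV
    have h1 : dist (f^[n] p.1) x < ε / 2 := mem_ball.mp hqV.1
    have h2 : dist (f^[n] p.2) x < ε / 2 := mem_ball.mp hqV.2
    calc dist (f^[n] p.1) (f^[n] p.2)
        ≤ dist (f^[n] p.1) x + dist x (f^[n] p.2) := dist_triangle _ _ _
      _ < ε := by rw [dist_comm x] at *; linarith
end

section
/- Let f : X → X be a minimal weakly mixing map on a compact metric space X. Then for every x ∈ X, the set of y ∈ X such that (x,y) has dense orbit under f × f is a dense G_δ subset of X. -/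
open Metric Filter Topology Set

section Aux

variable {X : Type*} [MetricSpace X] [CompactSpace X]

/-- Hitting-time set. -/
private def NSet (f : X → X) (U V : Set X) : Set ℕ := {n | (f^[n] '' U ∩ V).Nonempty}

private lemma iter_pair (f : X → X) (n : ℕ) (p : X × X) :
    (fun p : X × X => (f p.1, f p.2))^[n] p = (f^[n] p.1, f^[n] p.2) := by
  induction n generalizing p with
  | zero => simp
  | succ n ih =>
      rw [Function.iterate_succ_apply, ih]
      simp [Function.iterate_succ_apply]

private lemma minimal_surj (f : X → X) (hmin : MinimalMap f) : Function.Surjective f := by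
  rcases isEmpty_or_nonempty X with h | h
  · intro y; exact (h.false y).elim
  · have hM := hmin.2 (Set.range f) (isCompact_range hmin.1).isClosed
      ⟨f (Classical.arbitrary X), ⟨_, rfl⟩⟩ (fun a _ => ⟨a, rfl⟩)
    intro y
    have : y ∈ Set.range f := hM ▸ Set.mem_univ y
    exact this

private lemma orbit_dense (f : X → X) (hmin : MinimalMap f) (z : X) :
    Dense (Set.range fun n : ℕ => f^[n] z) := by
  have hM := hmin.2 (closure (Set.range fun n : ℕ => f^[n] z)) isClosed_closure
    ⟨z, subset_closure ⟨0, rfl⟩⟩ ?_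
  · rw [dense_iff_closure_eq]; exact hM
  · intro a ha
    have h1 : f '' closure (Set.range fun n : ℕ => f^[n] z) ⊆
        closure (Set.range fun n : ℕ => f^[n] z) := by
      refine (image_closure_subset_closure_image hmin.1).trans (closure_mono ?_)
      rintro _ ⟨_, ⟨n, rfl⟩, rfl⟩
      exact ⟨n + 1, (Function.iterate_succ_apply' f n z).symm ▸ rfl⟩
    exact h1 ⟨a, ha, rfl⟩

private lemma syndetic_visits (f : X → X) (hmin : MinimalMap f)
    (V : Set X) (hV : IsOpen V) (hVne : V.Nonempty) :
    ∃ N : ℕ, ∀ (z : X) (k : ℕ), ∃ j ≤ N, f^[k + j] z ∈ V := by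
  have hf : Continuous f := hmin.1
  have hcov : (Set.univ : Set X) ⊆ ⋃ n : ℕ, f^[n] ⁻¹' V := by
    intro z _
    obtain ⟨_, ⟨n, rfl⟩, hw⟩ := (orbit_dense f hmin z).exists_mem_open hV hVne
    exact Set.mem_iUnion.2 ⟨n, hw⟩
  obtain ⟨t, ht⟩ := isCompact_univ.elim_finite_subcover (fun n : ℕ => f^[n] ⁻¹' V)
    (fun n => hV.preimage (hf.iterate n)) hcov
  refine ⟨t.sup id, fun z k => ?_⟩
  obtain ⟨j, hjt, hj⟩ := Set.mem_iUnion₂.1 (ht (Set.mem_univ (f^[k] z)))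
  refine ⟨j, Finset.le_sup (f := id) hjt, ?_⟩
  rw [add_comm, Function.iterate_add_apply]
  exact hj

private lemma NSet_nonempty (f : X → X) (hwm : WeaklyMixing f)
    (U V : Set X) (hU : IsOpen U) (hV : IsOpen V) (hUne : U.Nonempty) (hVne : V.Nonempty) :
    ∃ n, n ∈ NSet f U V := by
  obtain ⟨n, p, ⟨q, hq, rfl⟩, hp⟩ := hwm (U ×ˢ U) (V ×ˢ V) (hU.prod hU) (hV.prod hV)
    (hUne.prod hUne) (hVne.prod hVne)
  rw [iter_pair] at hp
  exact ⟨n, f^[n] q.1, ⟨q.1, hq.1, rfl⟩, hp.1⟩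

private lemma pair_lemma (f : X → X) (hf : Continuous f) (hwm : WeaklyMixing f)
    (U1 V1 U2 V2 : Set X) (hU1 : IsOpen U1) (hV1 : IsOpen V1) (hU2 : IsOpen U2)
    (hV2 : IsOpen V2) (hU1n : U1.Nonempty) (hV1n : V1.Nonempty) (hU2n : U2.Nonempty)
    (hV2n : V2.Nonempty) :
    ∃ U V : Set X, IsOpen U ∧ IsOpen V ∧ U.Nonempty ∧ V.Nonempty ∧
      NSet f U V ⊆ NSet f U1 V1 ∩ NSet f U2 V2 := by
  obtain ⟨n, p, ⟨q, hq, rfl⟩, hp⟩ := hwm (U1 ×ˢ V1) (U2 ×ˢ V2) (hU1.prod hV1)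
    (hU2.prod hV2) (hU1n.prod hV1n) (hU2n.prod hV2n)
  rw [iter_pair] at hp
  refine ⟨U1 ∩ f^[n] ⁻¹' U2, V1 ∩ f^[n] ⁻¹' V2,
    hU1.inter (hU2.preimage (hf.iterate n)), hV1.inter (hV2.preimage (hf.iterate n)),
    ⟨q.1, hq.1, hp.1⟩, ⟨q.2, hq.2, hp.2⟩, ?_⟩
  rintro m ⟨_, ⟨w, ⟨hw1, hw2⟩, rfl⟩, hv1, hv2⟩
  constructor
  · exact ⟨f^[m] w, ⟨w, hw1, rfl⟩, hv1⟩
  · refine ⟨f^[m] (f^[n] w), ⟨f^[n] w, hw2, rfl⟩, ?_⟩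
    have : f^[m] (f^[n] w) = f^[n] (f^[m] w) := by
      rw [← Function.iterate_add_apply, ← Function.iterate_add_apply, add_comm]
    rw [this]
    exact hv2

private lemma thick_aux (f : X → X) (hf : Continuous f) (hwm : WeaklyMixing f)
    (hsurj : Function.Surjective f)
    (U V : Set X) (hU : IsOpen U) (hV : IsOpen V) (hUne : U.Nonempty) (hVne : V.Nonempty) :
    ∀ L : ℕ, ∃ U' V' : Set X, IsOpen U' ∧ IsOpen V' ∧ U'.Nonempty ∧ V'.Nonempty ∧
      ∀ j ≤ L, NSet f U' V' ⊆ NSet f U (f^[j] ⁻¹' V) := by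
  intro L
  induction L with
  | zero =>
      refine ⟨U, V, hU, hV, hUne, hVne, fun j hj => ?_⟩
      interval_cases j
      simp [NSet]
  | succ L ih =>
      obtain ⟨U', V', hU', hV', hU'n, hV'n, hsub⟩ := ih
      have hpre : IsOpen (f^[L+1] ⁻¹' V) := hV.preimage (hf.iterate (L+1))
      have hpren : (f^[L+1] ⁻¹' V).Nonempty := hVne.preimage (hsurj.iterate (L+1))
      obtain ⟨U'', V'', hU'', hV'', hU''n, hV''n, hsub2⟩ :=
        pair_lemma f hf hwm U' V' U (f^[L+1] ⁻¹' V) hU' hV' hU hpre hU'n hV'n hUne hpren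
      refine ⟨U'', V'', hU'', hV'', hU''n, hV''n, fun j hj m hm => ?_⟩
      rcases Nat.lt_or_ge j (L+1) with h | h
      · exact hsub j (Nat.lt_succ_iff.1 h) ((hsub2 hm).1)
      · have : j = L + 1 := le_antisymm hj h
        subst this
        exact (hsub2 hm).2

private lemma thick (f : X → X) (hf : Continuous f) (hwm : WeaklyMixing f)
    (hsurj : Function.Surjective f)
    (U V : Set X) (hU : IsOpen U) (hV : IsOpen V) (hUne : U.Nonempty) (hVne : V.Nonempty)
    (L : ℕ) : ∃ m : ℕ, ∀ j ≤ L, (m + j) ∈ NSet f U V := by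
  obtain ⟨U', V', hU', hV', hU'n, hV'n, hsub⟩ := thick_aux f hf hwm hsurj U V hU hV hUne hVne L
  obtain ⟨m, hm⟩ := NSet_nonempty f hwm U' V' hU' hV' hU'n hV'n
  refine ⟨m, fun j hj => ?_⟩
  obtain ⟨_, ⟨w, hw, rfl⟩, hv⟩ := hsub j hj hm
  refine ⟨f^[m + j] w, ⟨w, hw, rfl⟩, ?_⟩
  rw [add_comm, Function.iterate_add_apply]
  exact hv

end Aux
/-- for a minimal weakly mixing map, the set of partners of a given
point forming a transitive pair of f × f is a dense Gδ. -/
theorem stmt15 {X : Type*} [MetricSpace X] [CompactSpace X]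
    (f : X → X) (hmin : MinimalMap f) (hwm : WeaklyMixing f) (x : X) :
    Dense {y : X | Dense (Set.range fun n : ℕ => (f^[n] x, f^[n] y))} ∧
    IsGδ {y : X | Dense (Set.range fun n : ℕ => (f^[n] x, f^[n] y))} := by
  classical
  have hf : Continuous f := hmin.1
  have hsurj := minimal_surj f hmin
  obtain ⟨b, hbc, hbne, hbb⟩ := TopologicalSpace.exists_countable_basis (X × X)
  set D : Set (X × X) → Set X := fun B => {y : X | ∃ n : ℕ, (f^[n] x, f^[n] y) ∈ B} with hD
  have hT : {y : X | Dense (Set.range fun n : ℕ => (f^[n] x, f^[n] y))} = ⋂ B ∈ b, D B := by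
    ext y
    simp only [Set.mem_setOf_eq, Set.mem_iInter, hD]
    rw [hbb.dense_iff]
    constructor
    · intro h B hB
      obtain ⟨p, hp1, n, hp2⟩ := h B hB (Set.nonempty_iff_ne_empty.2 (fun he => hbne (he ▸ hB)))
      refine ⟨n, ?_⟩
      have h' := hp1
      rw [← hp2] at h'
      simpa using h'
    · rintro h B hB -
      obtain ⟨n, hn⟩ := h B hB
      exact ⟨_, hn, n, rfl⟩
  have hopen : ∀ B ∈ b, IsOpen (D B) := by
    intro B hB
    have : D B = ⋃ n : ℕ, (fun y : X => (f^[n] x, f^[n] y)) ⁻¹' B := by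
      ext y; simp [hD]
    rw [this]
    exact isOpen_iUnion fun n =>
      (hbb.isOpen hB).preimage (Continuous.prodMk continuous_const (hf.iterate n))
  have hdense : ∀ B ∈ b, Dense (D B) := by
    intro B hB
    have hBne : B.Nonempty := Set.nonempty_iff_ne_empty.2 (fun he => hbne (he ▸ hB))
    rw [dense_iff_inter_open]
    intro W hW hWne
    obtain ⟨p, hp⟩ := hBne
    obtain ⟨V1, V2, hV1, hV2, hp1, hp2, hsub⟩ :=
      isOpen_prod_iff.mp (hbb.isOpen hB) p.1 p.2 hp
    obtain ⟨N, hN⟩ := syndetic_visits f hmin V1 hV1 ⟨p.1, hp1⟩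
    obtain ⟨m, hm⟩ := thick f hf hwm hsurj W V2 hW hV2 hWne ⟨p.2, hp2⟩ N
    obtain ⟨j, hjN, hx⟩ := hN x m
    obtain ⟨_, ⟨w, hw, rfl⟩, hq⟩ := hm j hjN
    exact ⟨w, hw, m + j, hsub (Set.mk_mem_prod hx hq)⟩
  constructor
  · rw [hT]
    exact dense_biInter_of_isOpen hopen hbc hdense
  · rw [hT]
    exact IsGδ.biInter hbc fun B hB => (hopen B hB).isGδ
end
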